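/- arXiv:2409.10360 — 8 statements merged into one kernel-verified Lean document; each statement's English description precedes it below -/
import Mathlib

section
/- Drift coefficient asymptotics for the rescaled Moran line counting process. Assume strong or moderately strong selection. For every compact set K ⊆ ℝ, writing x̂ := μ_N + x σ_N, one has lim_{N→∞} sup_{x ∈ E_N ∩ K} | (1/σ_N) ( x̂ (1 − x̂/N) − (γ/(2 s_N N)) x̂ (x̂ − 1) ) + x | = 0; that is, the normalised difference between the up-rate and the down-rate of the time-rescaled, centred and normalised line counting process converges to the Ornstein–Uhlenbeck drift −x, uniformly on compact sets intersected with the lattice E_N. -/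
open Filter Topology

/-! With `ε := σ_N / μ_N`, the choice of `μ_N` and `σ_N` gives `σ_N² = μ_N (N - μ_N) / N` and
`ε² = γ / (2 s_N N)`, and under these two relations the normalised drift at `x` is exactly
`ε (1 + x ε - x²)`. Since `N s_N → ∞`, `ε → 0`, and the bound `ε (1 + C ε + C²)` for `|x| ≤ C`
is uniform on a compact set. -/

lemma drift_identity {m σ n : ℝ} (x : ℝ) (hm : m ≠ 0) (hσ : σ ≠ 0) (hn : n ≠ 0)
    (hvar : σ ^ 2 = m * (n - m) / n) :
    (1 / σ) * ((m + x * σ) * (1 - (m + x * σ) / n)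
        - ((n - m) / (m * n)) * (m + x * σ) * ((m + x * σ) - 1)) + x
      = σ / m * (1 + x * (σ / m) - x ^ 2) := by
  have hvar' : σ ^ 2 * n = m * (n - m) := by field_simp at hvar; linarith
  field_simp
  linear_combination (-m - σ * x) * hvar'

lemma moran_drift_eq {s γ n μ σ : ℝ} (hs : 0 < s) (hγ : 0 < γ) (hn : 0 < n)
    (hμ : μ = 2 * s * n / (2 * s + γ))
    (hσ : σ = Real.sqrt ((2 * s / (2 * s + γ)) * (1 - 2 * s / (2 * s + γ)) * n)) (x : ℝ) :
    (1 / σ) * ((μ + x * σ) * (1 - (μ + x * σ) / n)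
        - (γ / (2 * s * n)) * (μ + x * σ) * ((μ + x * σ) - 1)) + x
      = Real.sqrt (γ / (2 * s * n)) * (1 + x * Real.sqrt (γ / (2 * s * n)) - x ^ 2) := by
  have hp_pos : 0 < 2 * s / (2 * s + γ) := by positivity
  have hp_lt_one : 2 * s / (2 * s + γ) < 1 := by rw [div_lt_one (by positivity)]; linarith
  have hμ_pos : 0 < μ := by rw [hμ]; positivity
  have hσ_sq : σ ^ 2 = (2 * s / (2 * s + γ)) * (1 - 2 * s / (2 * s + γ)) * n := by
    rw [hσ, Real.sq_sqrt (by have := sub_pos.2 hp_lt_one; positivity)]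
  have hσ_pos : 0 < σ := by
    rw [hσ, Real.sqrt_pos]; have := sub_pos.2 hp_lt_one; positivity
  have hvar : σ ^ 2 = μ * (n - μ) / n := by rw [hσ_sq, hμ]; field_simp
  have hcoeff : γ / (2 * s * n) = (n - μ) / (μ * n) := by
    rw [hμ, div_eq_div_iff (by positivity) (by positivity)]; field_simp; ring
  have hratio : Real.sqrt (γ / (2 * s * n)) = σ / μ := by
    rw [← Real.sqrt_sq (div_nonneg hσ_pos.le hμ_pos.le), div_pow, hvar, hcoeff]
    congr 1; field_simp
  rw [hratio, hcoeff]
  exact drift_identity x hμ_pos.ne' hσ_pos.ne' hn.ne' hvar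

lemma abs_mul_one_add_mul_sub_sq_le {ε x C : ℝ} (hε : 0 ≤ ε) (hx : |x| ≤ C) :
    |ε * (1 + x * ε - x ^ 2)| ≤ ε * (1 + C * ε + C ^ 2) := by
  rw [abs_mul, abs_of_nonneg hε]
  gcongr
  have hxε : |x * ε| ≤ C * ε := by rw [abs_mul, abs_of_nonneg hε]; gcongr
  have hx2 : x ^ 2 ≤ C ^ 2 := by rw [← sq_abs]; gcongr
  rw [abs_le] at hxε ⊢
  constructor <;> nlinarith [sq_nonneg x]

lemma tendsto_sSup_abs_drift {ε : ℕ → ℝ} (hε : Tendsto ε atTop (𝓝 0)) (hε_nonneg : ∀ N, 0 ≤ ε N)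
    {K : Set ℝ} (hK : Bornology.IsBounded K) (A : ℕ → Set ℝ) (hA : ∀ N, A N ⊆ K) :
    Tendsto (fun N => sSup ((fun x => |ε N * (1 + x * ε N - x ^ 2)|) '' A N)) atTop (𝓝 0) := by
  obtain ⟨C, hC_pos, hC⟩ := hK.exists_pos_norm_le
  have hbound : Tendsto (fun N => ε N * (1 + C * ε N + C ^ 2)) atTop (𝓝 0) := by
    simpa using hε.mul ((tendsto_const_nhds.add (tendsto_const_nhds.mul hε)).add
      (tendsto_const_nhds (x := C ^ 2)))
  refine squeeze_zero (fun N => Real.sSup_nonneg ?_) (fun N => Real.sSup_le ?_ ?_) hbound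
  · rintro _ ⟨x, -, rfl⟩
    exact abs_nonneg _
  · rintro _ ⟨x, hx, rfl⟩
    exact abs_mul_one_add_mul_sub_sq_le (hε_nonneg N) (hC x (hA N hx))
  · have := hε_nonneg N
    positivity

theorem moran_drift_asymptotics_general
    (γ : ℝ) (hγ : 0 < γ) (s : ℕ → ℝ) (hs : ∀ N, 0 < s N)
    (hNs : Tendsto (fun N : ℕ => (N : ℝ) * s N) atTop atTop)
    (μ σ : ℕ → ℝ)
    (hμ : ∀ N : ℕ, μ N = 2 * s N * N / (2 * s N + γ))
    (hσ : ∀ N : ℕ, σ N =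
      Real.sqrt ((2 * s N / (2 * s N + γ)) * (1 - 2 * s N / (2 * s N + γ)) * N))
    (E : ℕ → Set ℝ)
    (K : Set ℝ) (hK : IsCompact K) :
    Tendsto (fun N : ℕ =>
      sSup ((fun x : ℝ =>
        |(1 / σ N) * ((μ N + x * σ N) * (1 - (μ N + x * σ N) / N)
            - (γ / (2 * s N * N)) * (μ N + x * σ N) * ((μ N + x * σ N) - 1))
          + x|) '' (E N ∩ K)))
      atTop (nhds 0) := by
  have h2sN : Tendsto (fun N : ℕ => 2 * s N * N) atTop atTop := by
    refine (hNs.const_mul_atTop two_pos).congr fun N => ?_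
    ring
  have hε : Tendsto (fun N : ℕ => Real.sqrt (γ / (2 * s N * N))) atTop (𝓝 0) := by
    simpa using (tendsto_const_nhds.div_atTop h2sN).sqrt
  refine (tendsto_sSup_abs_drift hε (fun N => Real.sqrt_nonneg _) hK.isBounded
    (fun N => E N ∩ K) (fun N => Set.inter_subset_right)).congr' ?_
  filter_upwards [eventually_ge_atTop 1] with N hN
  simp only [moran_drift_eq (hs N) hγ (Nat.cast_pos.2 hN) (hμ N) (hσ N)]

/-- Drift coefficient asymptotics for the rescaled Moran line counting process:
the normalised difference between the up-rate and the down-rate converges to the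
Ornstein–Uhlenbeck drift `-x`, uniformly on compact sets intersected with `E_N`. -/
theorem moran_drift_asymptotics
    (γ : ℝ) (hγ : 0 < γ) (s : ℕ → ℝ) (hs : ∀ N, 0 < s N)
    (hconv : ∃ l : ℝ, 0 ≤ l ∧ Tendsto s atTop (nhds l))
    (hNs : Tendsto (fun N : ℕ => (N : ℝ) * s N) atTop atTop)
    (μ σ : ℕ → ℝ)
    (hμ : ∀ N : ℕ, μ N = 2 * s N * N / (2 * s N + γ))
    (hσ : ∀ N : ℕ, σ N =
      Real.sqrt ((2 * s N / (2 * s N + γ)) * (1 - 2 * s N / (2 * s N + γ)) * N))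
    (E : ℕ → Set ℝ)
    (hE : ∀ N : ℕ, E N = {x : ℝ | ∃ k : ℕ, 1 ≤ k ∧ k ≤ N ∧ x = ((k : ℝ) - μ N) / σ N})
    (K : Set ℝ) (hK : IsCompact K) :
    Tendsto (fun N : ℕ =>
      sSup ((fun x : ℝ =>
        |(1 / σ N) * ((μ N + x * σ N) * (1 - (μ N + x * σ N) / N)
            - (γ / (2 * s N * N)) * (μ N + x * σ N) * ((μ N + x * σ N) - 1))
          + x|) '' (E N ∩ K)))
      atTop (nhds 0) :=
  moran_drift_asymptotics_general γ hγ s hs hNs μ σ hμ hσ E K hK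
end

section
/- Diffusion coefficient asymptotics for the rescaled Moran line counting process. Assume strong or moderately strong selection. For every compact set K ⊆ ℝ, writing x̂ := μ_N + x σ_N, one has lim_{N→∞} sup_{x ∈ E_N ∩ K} | (1/(2 σ_N²)) ( x̂ (1 − x̂/N) + (γ/(2 s_N N)) x̂ (x̂ − 1) ) − 1 | = 0; that is, the normalised sum of the up-rate and the down-rate of the time-rescaled, centred and normalised line counting process converges to the Ornstein–Uhlenbeck diffusion coefficient σ²/2 = 1, uniformly on compact sets intersected with the lattice E_N. -/
/-!
With `p := 2s/(2s+γ)` and `a := γ/(2sN)` one has `μ = pN`, `aμ = 1 - p` and `σ² = p(1-p)N`.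
The rate sum `f(y) = y(1 - y/N) + a y(y - 1)` is a quadratic in `y` with `f(μ) = 2σ² - (1 - p)`,
so expanding around `μ` at `y = μ + xσ` gives
`f(y)/(2σ²) - 1 = -(1-p)/(2σ²) + x f'(μ)/(2σ) + x²(a - 1/N)/2`.
On a compact set `|x|` is bounded, and every coefficient vanishes in the limit because
`σ² ≍ sN → ∞`, `a → 0` and `1/N → 0`.
-/

open Filter Topology

lemma tendsto_sSup_abs_image_of_abs_le {ι α : Type*} {l : Filter ι} {f : ι → α → ℝ}
    {S : ι → Set α} {B : ι → ℝ} (hB : Tendsto B l (𝓝 0))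
    (hfB : ∀ᶠ i in l, ∀ x ∈ S i, |f i x| ≤ B i) :
    Tendsto (fun i => sSup ((fun x => |f i x|) '' S i)) l (𝓝 0) := by
  have hB' : Tendsto (fun i => max (B i) 0) l (𝓝 0) := by
    simpa using hB.max (tendsto_const_nhds (x := (0 : ℝ)))
  refine tendsto_of_tendsto_of_tendsto_of_le_of_le' tendsto_const_nhds hB'
    (Eventually.of_forall fun i => Real.sSup_nonneg ?_) ?_
  · rintro _ ⟨x, -, rfl⟩
    exact abs_nonneg _
  filter_upwards [hfB] with i hi
  refine Real.sSup_le ?_ (le_max_right _ _)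
  rintro _ ⟨x, hx, rfl⟩
  exact (hi x hx).trans (le_max_left _ _)

section RateSum

variable {N p a μ σ x : ℝ}

lemma rate_sum_div_sub_one_eq (hN : N ≠ 0) (hσ : σ ≠ 0) (hμ : μ = p * N)
    (haμ : a * μ = 1 - p) (hσ2 : σ ^ 2 = p * (1 - p) * N) :
    (1 / (2 * σ ^ 2)) * ((μ + x * σ) * (1 - (μ + x * σ) / N)
        + a * (μ + x * σ) * ((μ + x * σ) - 1)) - 1
      = -(1 - p) / (2 * σ ^ 2) + x * (3 - a - 4 * p) / (2 * σ) + x ^ 2 * (a - 1 / N) / 2 := by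
  have ha : a * p * N = 1 - p := by rw [mul_assoc, ← hμ, haμ]
  subst hμ
  field_simp
  linear_combination N * (p * N - 1 + 2 * x * σ) * ha - 2 * N * hσ2

lemma abs_rate_sum_div_sub_one_le {M : ℝ} (hN : 0 < N) (hσ : 0 < σ) (hp0 : 0 ≤ p)
    (hp1 : p ≤ 1) (ha : 0 ≤ a) (hμ : μ = p * N) (haμ : a * μ = 1 - p)
    (hσ2 : σ ^ 2 = p * (1 - p) * N) (hx : |x| ≤ M) :
    |(1 / (2 * σ ^ 2)) * ((μ + x * σ) * (1 - (μ + x * σ) / N)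
        + a * (μ + x * σ) * ((μ + x * σ) - 1)) - 1|
      ≤ 1 / (2 * σ ^ 2) + M * (3 + a) / (2 * σ) + M ^ 2 * (a + 1 / N) / 2 := by
  rw [rate_sum_div_sub_one_eq hN.ne' hσ.ne' hμ haμ hσ2]
  have hM : 0 ≤ M := (abs_nonneg x).trans hx
  have hx2 : x ^ 2 ≤ M ^ 2 := sq_le_sq' (neg_le_of_abs_le hx) (le_of_abs_le hx)
  have hconst : |-(1 - p) / (2 * σ ^ 2)| ≤ 1 / (2 * σ ^ 2) := by
    rw [abs_div, abs_neg, abs_of_pos (by positivity : 0 < 2 * σ ^ 2)]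
    gcongr
    exact abs_le.2 ⟨by linarith, by linarith⟩
  have hlin : |x * (3 - a - 4 * p) / (2 * σ)| ≤ M * (3 + a) / (2 * σ) := by
    rw [abs_div, abs_mul, abs_of_pos (by positivity : 0 < 2 * σ)]
    gcongr
    exact abs_le.2 ⟨by linarith, by linarith⟩
  have hquad : |x ^ 2 * (a - 1 / N) / 2| ≤ M ^ 2 * (a + 1 / N) / 2 := by
    have hN' : 0 ≤ 1 / N := by positivity
    rw [abs_div, abs_mul, abs_of_nonneg (sq_nonneg x), abs_two]
    gcongr
    exact abs_le.2 ⟨by linarith, by linarith⟩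
  calc _ ≤ |-(1 - p) / (2 * σ ^ 2)| + |x * (3 - a - 4 * p) / (2 * σ)|
          + |x ^ 2 * (a - 1 / N) / 2| := abs_add_three _ _ _
    _ ≤ _ := by gcongr

end RateSum

lemma tendsto_moran_variance_atTop {γ l : ℝ} (hγ : 0 < γ) (hl : 0 ≤ l) {s : ℕ → ℝ}
    (hs : ∀ N, 0 < s N) (hsl : Tendsto s atTop (𝓝 l))
    (hNs : Tendsto (fun N : ℕ => (N : ℝ) * s N) atTop atTop) :
    Tendsto (fun N : ℕ => (2 * s N / (2 * s N + γ)) * (1 - 2 * s N / (2 * s N + γ)) * N)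
      atTop atTop := by
  have hden : Tendsto (fun N => 2 * γ / (2 * s N + γ) ^ 2) atTop
      (𝓝 (2 * γ / (2 * l + γ) ^ 2)) :=
    tendsto_const_nhds.div (((hsl.const_mul 2).add_const γ).pow 2) (by positivity)
  refine (hden.pos_mul_atTop (by positivity) hNs).congr fun N => ?_
  have : 2 * s N + γ ≠ 0 := by linarith [hs N]
  field_simp
  ring

theorem moran_diffusion_asymptotics_general
    (γ : ℝ) (hγ : 0 < γ) (s : ℕ → ℝ) (hs : ∀ N, 0 < s N)
    (hconv : ∃ l : ℝ, 0 ≤ l ∧ Tendsto s atTop (nhds l))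
    (hNs : Tendsto (fun N : ℕ => (N : ℝ) * s N) atTop atTop)
    (μ σ : ℕ → ℝ)
    (hμ : ∀ N : ℕ, μ N = 2 * s N * N / (2 * s N + γ))
    (hσ : ∀ N : ℕ, σ N =
      Real.sqrt ((2 * s N / (2 * s N + γ)) * (1 - 2 * s N / (2 * s N + γ)) * N))
    (E : ℕ → Set ℝ)
    (K : Set ℝ) (hK : IsCompact K) :
    Tendsto (fun N : ℕ =>
      sSup ((fun x : ℝ =>
        |(1 / (2 * (σ N) ^ 2)) * ((μ N + x * σ N) * (1 - (μ N + x * σ N) / N)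
            + (γ / (2 * s N * N)) * (μ N + x * σ N) * ((μ N + x * σ N) - 1))
          - 1|) '' (E N ∩ K)))
      atTop (nhds 0) := by
  obtain ⟨l, hl, hsl⟩ := hconv
  obtain ⟨M, hM⟩ := isBounded_iff_forall_norm_le.1 hK.isBounded
  have hσ_top : Tendsto σ atTop atTop :=
    (Real.tendsto_sqrt_atTop.comp (tendsto_moran_variance_atTop hγ hl hs hsl hNs)).congr
      fun N => (hσ N).symm
  have ha : Tendsto (fun N : ℕ => γ / (2 * s N * N)) atTop (𝓝 0) :=
    tendsto_const_nhds.div_atTop ((hNs.const_mul_atTop two_pos).congr fun N => by ring)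
  refine tendsto_sSup_abs_image_of_abs_le (B := fun N => 1 / (2 * σ N ^ 2)
    + M * (3 + γ / (2 * s N * N)) / (2 * σ N) + M ^ 2 * (γ / (2 * s N * N) + 1 / N) / 2) ?_ ?_
  · have hσ2_top := (tendsto_pow_atTop two_ne_zero).comp hσ_top
    simpa using
      (((tendsto_const_nhds (x := (1 : ℝ))).div_atTop (hσ2_top.const_mul_atTop two_pos)).add
        (((ha.const_add 3).const_mul M).div_atTop (hσ_top.const_mul_atTop two_pos))).add
        (((ha.add tendsto_one_div_atTop_nhds_zero_nat).const_mul (M ^ 2)).div_const 2)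
  filter_upwards [eventually_gt_atTop 0] with N hN x hx
  have hsN := hs N
  have hN' : (0 : ℝ) < N := Nat.cast_pos.2 hN
  have hp : 2 * s N / (2 * s N + γ) < 1 := (div_lt_one (by positivity)).2 (by linarith)
  have hvar : 0 < (2 * s N / (2 * s N + γ)) * (1 - 2 * s N / (2 * s N + γ)) * N :=
    mul_pos (mul_pos (by positivity) (sub_pos.2 hp)) hN'
  refine abs_rate_sum_div_sub_one_le hN' (by rw [hσ]; exact Real.sqrt_pos.2 hvar)
    (by positivity) hp.le (by positivity) (by rw [hμ, mul_div_right_comm])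
    (by rw [hμ]; field_simp; ring) (by rw [hσ, Real.sq_sqrt hvar.le]) (by simpa using hM x hx.2)

/-- Diffusion coefficient asymptotics for the rescaled Moran line counting process:
the normalised sum of the up-rate and the down-rate converges to the
Ornstein–Uhlenbeck diffusion coefficient `σ²/2 = 1`, uniformly on compact sets
intersected with `E_N`. -/
theorem moran_diffusion_asymptotics
    (γ : ℝ) (hγ : 0 < γ) (s : ℕ → ℝ) (hs : ∀ N, 0 < s N)
    (hconv : ∃ l : ℝ, 0 ≤ l ∧ Tendsto s atTop (nhds l))
    (hNs : Tendsto (fun N : ℕ => (N : ℝ) * s N) atTop atTop)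
    (μ σ : ℕ → ℝ)
    (hμ : ∀ N : ℕ, μ N = 2 * s N * N / (2 * s N + γ))
    (hσ : ∀ N : ℕ, σ N =
      Real.sqrt ((2 * s N / (2 * s N + γ)) * (1 - 2 * s N / (2 * s N + γ)) * N))
    (E : ℕ → Set ℝ)
    (hE : ∀ N : ℕ, E N = {x : ℝ | ∃ k : ℕ, 1 ≤ k ∧ k ≤ N ∧ x = ((k : ℝ) - μ N) / σ N})
    (K : Set ℝ) (hK : IsCompact K) :
    Tendsto (fun N : ℕ =>
      sSup ((fun x : ℝ =>
        |(1 / (2 * (σ N) ^ 2)) * ((μ N + x * σ N) * (1 - (μ N + x * σ N) / N)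
            + (γ / (2 * s N * N)) * (μ N + x * σ N) * ((μ N + x * σ N) - 1))
          - 1|) '' (E N ∩ K)))
      atTop (nhds 0) :=
  moran_diffusion_asymptotics_general γ hγ s hs hconv hNs μ σ hμ hσ E K hK
end

section
/- Lemma (convergence of generators, logistic branching case). Under the standing assumptions, for every three times continuously differentiable function f : ℝ → ℝ such that f, f', f'' and f''' are bounded, and every compact set K ⊆ ℝ, writing x̂ := μ_N + x σ_N, one has lim_{N→∞} sup_{x ∈ E_N ∩ K, x̂ ≥ 1} | Σ_{j≥1} h_N(x̂) x̂ π_j (f(x + j/σ_N) − f(x)) + ρ_N^{−1} (d_N x̂ + c_N x̂ (x̂ − 1)) (f(x − 1/σ_N) − f(x)) − ( − π̄ x f'(x) + ((v² + π̄)/2) f''(x) ) | = 0. (The displayed expression is the generator of the time-rescaled, centred and normalised logistic branching process X̃^N_t = (X^N_{t/ρ_N} − μ_N)/σ_N evaluated at the restriction of f to E_N, and −π̄ x f'(x) + ((v²+π̄)/2) f''(x) is the generator of the Ornstein–Uhlenbeck process with drift parameter π̄ and variance parameter v² + π̄.) -/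
/-!
Write `t = σ⁻¹`, `q = d / c`, `x = (k - μ) / σ` (so `k = (1 + x t) / t²`) and
`h(k) = 1 + e t y` with `e = C ε` and `|y| ≤ |x|`. Expanding `f` to second order around `x`,
the branching and death parts of the rescaled generator reproduce `-π̄ x f'(x)` and
`((v² + π̄) / 2) f''(x)` up to coefficient errors that are polynomials in `(x, y, t, e, q)`
vanishing at `t = e = q = 0`, plus Taylor remainders of order `t` (this is where the third
moment enters). The resulting error bound is jointly continuous, so by compactness of
`K × [-R, R]` it is uniformly small as soon as `(t, e, q)` is close to `0`, which is the case
for large `N`.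
-/

open Filter Set Topology

theorem abs_sub_taylor_two_le {f : ℝ → ℝ} (hf : ContDiff ℝ 3 f) {M : ℝ}
    (hM : ∀ x, |iteratedDeriv 3 f x| ≤ M) (x y : ℝ) :
    |f y - (f x + (y - x) * deriv f x + (y - x) ^ 2 / 2 * iteratedDeriv 2 f x)|
      ≤ M * |y - x| ^ 3 / 6 := by
  rcases eq_or_ne x y with rfl | hxy
  · simp
  obtain ⟨x', -, hx'⟩ := taylor_mean_remainder_lagrange_iteratedDeriv (n := 2) hxy hf.contDiffOn
  have hderiv : ∀ n ≤ 2, iteratedDerivWithin n f (uIcc x y) x = iteratedDeriv n f x :=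
    fun n hn => iteratedDerivWithin_eq_iteratedDeriv (uniqueDiffOn_uIcc hxy)
      (hf.contDiffAt.of_le (by exact_mod_cast hn.trans (by norm_num))) left_mem_uIcc
  simp only [taylor_within_apply, Finset.sum_range_succ, Finset.sum_range_zero,
    hderiv 0 (by norm_num), hderiv 1 (by norm_num), hderiv 2 le_rfl, iteratedDeriv_zero,
    iteratedDeriv_one, smul_eq_mul] at hx'
  norm_num [Nat.factorial] at hx'
  calc _ = |iteratedDeriv 3 f x'| * |y - x| ^ 3 / 6 := by
        rw [← abs_pow, ← abs_mul, ← abs_of_pos (by norm_num : (0 : ℝ) < 6), ← abs_div, ← hx']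
        ring_nf
    _ ≤ M * |y - x| ^ 3 / 6 := by gcongr; exact hM x'

theorem abs_tsum_jumps_sub_taylor_le {π : ℕ → ℝ} (hπ : ∀ j, 0 ≤ π j) {m₁ m₂ : ℝ}
    (h₁ : HasSum (fun j : ℕ => (j : ℝ) * π j) m₁)
    (h₂ : HasSum (fun j : ℕ => (j : ℝ) ^ 2 * π j) m₂)
    (h₃ : Summable (fun j : ℕ => (j : ℝ) ^ 3 * π j))
    {f : ℝ → ℝ} (hf : ContDiff ℝ 3 f) {M : ℝ} (hM : ∀ x, |iteratedDeriv 3 f x| ≤ M) (x t : ℝ) :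
    |∑' j : ℕ, π j * (f (x + j * t) - f x)
        - (m₁ * t * deriv f x + m₂ * t ^ 2 / 2 * iteratedDeriv 2 f x)|
      ≤ (∑' j : ℕ, (j : ℝ) ^ 3 * π j) * M * |t| ^ 3 / 6 := by
  set r : ℕ → ℝ := fun j =>
    f (x + j * t) - (f x + j * t * deriv f x + (j * t) ^ 2 / 2 * iteratedDeriv 2 f x) with hr_def
  have hr : ∀ j, ‖π j * r j‖ ≤ (j : ℝ) ^ 3 * π j * (M * |t| ^ 3 / 6) := fun j => by
    have := abs_sub_taylor_two_le hf hM x (x + j * t)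
    rw [add_sub_cancel_left, abs_mul, Nat.abs_cast] at this
    rw [Real.norm_eq_abs, abs_mul, abs_of_nonneg (hπ j)]
    calc π j * |r j| ≤ π j * (M * (j * |t|) ^ 3 / 6) := by gcongr; exact hπ j
      _ = _ := by ring
  have hbound := h₃.hasSum.mul_right (M * |t| ^ 3 / 6)
  have hsum := ((h₁.mul_right (t * deriv f x)).add
    (h₂.mul_right (t ^ 2 / 2 * iteratedDeriv 2 f x))).add
    (Summable.of_norm_bounded hbound.summable hr).hasSum
  have hfun : (fun j : ℕ => π j * (f (x + j * t) - f x)) = fun j =>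
      j * π j * (t * deriv f x) + j ^ 2 * π j * (t ^ 2 / 2 * iteratedDeriv 2 f x) + π j * r j := by
    funext j
    rw [hr_def]
    ring
  have hcancel : m₁ * (t * deriv f x) + m₂ * (t ^ 2 / 2 * iteratedDeriv 2 f x) + ∑' j, π j * r j
      - (m₁ * t * deriv f x + m₂ * t ^ 2 / 2 * iteratedDeriv 2 f x) = ∑' j, π j * r j := by ring
  rw [hfun, hsum.tsum_eq, hcancel, ← Real.norm_eq_abs]
  exact (tsum_of_norm_bounded hbound hr).trans_eq (by ring)

theorem one_le_of_hasSum_nat_mul {π : ℕ → ℝ} (hπ0 : π 0 = 0) (hπ : ∀ j, 0 ≤ π j)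
    (hπsum : ∑' j, π j = 1) {m : ℝ} (hm : HasSum (fun j : ℕ => (j : ℝ) * π j) m) : 1 ≤ m := by
  have hle : ∀ j, π j ≤ j * π j := fun j => by
    rcases j with _ | j
    · simp [hπ0]
    · exact le_mul_of_one_le_left (hπ _) (by simp)
  have hsum : Summable π := .of_nonneg_of_le hπ hle hm.summable
  exact hπsum ▸ hasSum_le hle hsum.hasSum hm

theorem exists_abs_le_and_eq_mul {a b c : ℝ} (hc : 0 ≤ c) (h : |a| ≤ b * c) :
    ∃ y, |y| ≤ c ∧ a = b * y := by
  rcases le_or_gt b 0 with hb | hb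
  · refine ⟨0, by simpa using hc, ?_⟩
    simpa using abs_nonpos_iff.mp (h.trans (mul_nonpos_of_nonpos_of_nonneg hb hc))
  · refine ⟨a / b, ?_, (mul_div_cancel₀ a hb.ne').symm⟩
    rwa [abs_div, abs_of_pos hb, div_le_iff₀' hb]

theorem tendsto_sSup_image_abs_nhds_zero {ι κ : Type*} {l : Filter ι} {S : ι → Set κ}
    {g : ι → κ → ℝ} (h : ∀ δ > 0, ∀ᶠ i in l, ∀ k ∈ S i, |g i k| < δ) :
    Tendsto (fun i => sSup ((fun k => |g i k|) '' S i)) l (𝓝 0) := by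
  refine tendsto_order.2 ⟨fun a ha => .of_forall fun i => ha.trans_le ?_, fun δ hδ => ?_⟩
  · exact Real.sSup_nonneg (by rintro _ ⟨k, -, rfl⟩; exact abs_nonneg _)
  · filter_upwards [h (δ / 2) (half_pos hδ)] with i hi
    refine (Real.sSup_le ?_ (half_pos hδ).le).trans_lt (half_lt_self hδ)
    rintro _ ⟨k, hk, rfl⟩
    exact (hi k hk).le

/-! With `t = σ⁻¹`, `q = d / c` and `h = 1 + e t y`, the state `k = (1 + x t) / t²` has total
branching rate `h k = birthFactor / t²` and, after rescaling time by `ρ`, total death rate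
`π̄ deathFactor / t²`. -/

def birthFactor (x y t e : ℝ) : ℝ := (1 + e * t * y) * (1 + x * t)

def deathFactor (x t q : ℝ) : ℝ := (1 + x * t) * (1 + x * t + t ^ 2 * (q - 1))

theorem generator_sub_ou_eq {πbar v2 ρ c d e k s x y H S F D₁ D₂ : ℝ}
    (hc : c ≠ 0) (hs : s ≠ 0) (hρ : ρ = c * s ^ 2 / πbar) (hk : k = s ^ 2 + x * s)
    (hH : H = 1 + e * s⁻¹ * y) :
    H * k * S + ρ⁻¹ * (d * k + c * k * (k - 1)) * F
        - (-(πbar * x * D₁) + (v2 + πbar) / 2 * D₂)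
      = πbar * ((1 + x * s⁻¹) * (e * y + s⁻¹ * (1 - d / c)) - x ^ 2 * s⁻¹) * D₁
        + (v2 / 2 * (birthFactor x y s⁻¹ e - 1) + πbar / 2 * (deathFactor x s⁻¹ (d / c) - 1)) * D₂
        + birthFactor x y s⁻¹ e * s ^ 2 * (S - (πbar * s⁻¹ * D₁ + v2 * s⁻¹ ^ 2 / 2 * D₂))
        + πbar * deathFactor x s⁻¹ (d / c) * s ^ 2
          * (F - (-s⁻¹ * D₁ + (-s⁻¹) ^ 2 / 2 * D₂)) := by
  subst hρ hk hH
  simp only [birthFactor, deathFactor]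
  field_simp
  ring

noncomputable def generatorErrorBound (f : ℝ → ℝ) (πbar v2 m₃ M x y t e q : ℝ) : ℝ :=
  |πbar * ((1 + x * t) * (e * y + t * (1 - q)) - x ^ 2 * t) * deriv f x
      + (v2 / 2 * (birthFactor x y t e - 1) + πbar / 2 * (deathFactor x t q - 1))
        * iteratedDeriv 2 f x|
    + (m₃ * |birthFactor x y t e| + πbar * |deathFactor x t q|) * M * |t| / 6

theorem eventually_forall_generatorErrorBound_lt {f : ℝ → ℝ} (hf : ContDiff ℝ 3 f)
    (πbar v2 m₃ M : ℝ) {P : Set (ℝ × ℝ)} (hP : IsCompact P) {δ : ℝ} (hδ : 0 < δ) :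
    ∀ᶠ z : ℝ × ℝ × ℝ in 𝓝 (0, 0, 0), ∀ p ∈ P,
      generatorErrorBound f πbar v2 m₃ M p.1 p.2 z.1 z.2.1 z.2.2 < δ := by
  refine hP.eventually_forall_of_forall_eventually fun p _ => ?_
  have hf₁ := hf.continuous_deriv (by norm_num)
  have hf₂ := hf.continuous_iteratedDeriv 2 (by norm_num)
  have hcont : Continuous fun w : (ℝ × ℝ × ℝ) × ℝ × ℝ =>
      generatorErrorBound f πbar v2 m₃ M w.2.1 w.2.2 w.1.1 w.1.2.1 w.1.2.2 := by
    simp only [generatorErrorBound, birthFactor, deathFactor]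
    fun_prop
  refine hcont.continuousAt.eventually (gt_mem_nhds ?_)
  simpa [generatorErrorBound, birthFactor, deathFactor] using hδ

theorem exists_abs_generator_sub_ou_le {π : ℕ → ℝ} (hπ : ∀ j, 0 ≤ π j) {πbar v2 : ℝ}
    (hmean : HasSum (fun j : ℕ => (j : ℝ) * π j) πbar)
    (hsecond : HasSum (fun j : ℕ => (j : ℝ) ^ 2 * π j) v2)
    (hthird : Summable (fun j : ℕ => (j : ℝ) ^ 3 * π j))
    {f : ℝ → ℝ} (hf : ContDiff ℝ 3 f) {M : ℝ} (hM : ∀ x, |iteratedDeriv 3 f x| ≤ M)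
    {ρ d c μ s H e k : ℝ} (hc : c ≠ 0) (hμ : μ = πbar * ρ / c) (hμpos : 0 < μ)
    (hs : s = √μ) (hH : |H - 1| ≤ e * |k - μ| / μ) :
    ∃ y, |y| ≤ |(k - μ) / s| ∧
      |(∑' j : ℕ, H * k * π j * (f ((k - μ) / s + j / s) - f ((k - μ) / s)))
          + ρ⁻¹ * (d * k + c * k * (k - 1)) * (f ((k - μ) / s - 1 / s) - f ((k - μ) / s))
          - (-(πbar * ((k - μ) / s) * deriv f ((k - μ) / s))
              + ((v2 + πbar) / 2) * iteratedDeriv 2 f ((k - μ) / s))|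
        ≤ generatorErrorBound f πbar v2 (∑' j : ℕ, (j : ℝ) ^ 3 * π j) M ((k - μ) / s) y s⁻¹ e
            (d / c) := by
  have hs₀ : 0 < s := hs ▸ Real.sqrt_pos.2 hμpos
  have hsμ : μ = s ^ 2 := by rw [hs, Real.sq_sqrt hμpos.le]
  set x := (k - μ) / s with hx
  have hk : k = s ^ 2 + x * s := by rw [hx, div_mul_cancel₀ _ hs₀.ne', ← hsμ]; ring
  have hρ : ρ = c * s ^ 2 / πbar := by
    have hπbar : πbar ≠ 0 := by rintro rfl; simp [hμ] at hμpos
    rw [eq_div_iff hπbar, ← hsμ, hμ]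
    field_simp
  have hH' : |H - 1| ≤ e * s⁻¹ * |x| := by
    calc |H - 1| ≤ e * |k - μ| / μ := hH
      _ = e * s⁻¹ * |x| := by
        rw [hk, hsμ, add_sub_cancel_left, abs_mul, abs_of_pos hs₀]
        field_simp
  obtain ⟨y, hy, hHy⟩ := exists_abs_le_and_eq_mul (abs_nonneg x) hH'
  refine ⟨y, hy, ?_⟩
  have hπbar : 0 ≤ πbar := hmean.nonneg fun j => mul_nonneg j.cast_nonneg (hπ j)
  have hA := abs_tsum_jumps_sub_taylor_le hπ hmean hsecond hthird hf hM x s⁻¹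
  have hB := abs_sub_taylor_two_le hf hM x (x - s⁻¹)
  rw [sub_sub_cancel_left, add_assoc, ← sub_sub, abs_neg] at hB
  have hS : ∑' j : ℕ, H * k * π j * (f (x + j / s) - f x)
      = H * k * ∑' j : ℕ, π j * (f (x + j * s⁻¹) - f x) := by
    rw [← tsum_mul_left]
    simp only [div_eq_mul_inv, mul_assoc]
  rw [abs_inv, abs_of_pos hs₀] at hA hB
  rw [hS, one_div, generator_sub_ou_eq hc hs₀.ne' hρ hk (eq_add_of_sub_eq' hHy),
    generatorErrorBound, abs_inv, abs_of_pos hs₀]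
  calc _ ≤ _ + _ + _ := abs_add_three _ _ _
    _ ≤ _ + |birthFactor x y s⁻¹ e| * s ^ 2 * ((∑' j : ℕ, (j : ℝ) ^ 3 * π j) * M * s⁻¹ ^ 3 / 6)
          + πbar * |deathFactor x s⁻¹ (d / c)| * s ^ 2 * (M * s⁻¹ ^ 3 / 6) := by
      simp only [abs_mul, abs_pow, abs_of_nonneg hπbar, abs_of_pos hs₀]
      gcongr
    _ = _ := by field_simp; ring

theorem logistic_generator_convergence_general
    (π : ℕ → ℝ) (hπ0 : π 0 = 0) (hπnn : ∀ j, 0 ≤ π j) (hπsum : ∑' j : ℕ, π j = 1)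
    (πbar v2 : ℝ)
    (hmean : HasSum (fun j : ℕ => (j : ℝ) * π j) πbar)
    (hsecond : HasSum (fun j : ℕ => (j : ℝ) ^ 2 * π j) v2)
    (hthird : Summable (fun j : ℕ => (j : ℝ) ^ 3 * π j))
    (ρ d c : ℕ → ℝ) (h : ℕ → ℕ → ℝ)
    (hc : ∀ N, 0 < c N)
    (μ σ : ℕ → ℝ)
    (hμ : ∀ N, μ N = πbar * ρ N / c N) (hσ : ∀ N, σ N = Real.sqrt (μ N))
    (hρc : Tendsto (fun N => ρ N / c N) atTop atTop)
    (hdc : Tendsto (fun N => d N / c N) atTop (nhds 0))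
    (hh : ∃ C : ℝ, ∃ ε : ℕ → ℝ, Tendsto ε atTop (nhds 0) ∧
      ∀ N k, |h N k - 1| ≤ C * ε N * |(k : ℝ) - μ N| / μ N)
    (f : ℝ → ℝ) (hf : ContDiff ℝ 3 f)
    (hbdd : ∀ i : ℕ, i ≤ 3 → ∃ M : ℝ, ∀ x : ℝ, |iteratedDeriv i f x| ≤ M)
    (K : Set ℝ) (hK : IsCompact K) :
    Tendsto (fun N : ℕ =>
      sSup ((fun k : ℕ =>
        |(∑' j : ℕ, h N k * (k : ℝ) * π j *
            (f (((k : ℝ) - μ N) / σ N + (j : ℝ) / σ N) - f (((k : ℝ) - μ N) / σ N)))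
          + (ρ N)⁻¹ * (d N * (k : ℝ) + c N * (k : ℝ) * ((k : ℝ) - 1)) *
            (f (((k : ℝ) - μ N) / σ N - 1 / σ N) - f (((k : ℝ) - μ N) / σ N))
          - (-(πbar * (((k : ℝ) - μ N) / σ N) * deriv f (((k : ℝ) - μ N) / σ N))
              + ((v2 + πbar) / 2) * iteratedDeriv 2 f (((k : ℝ) - μ N) / σ N))|)
        '' {k : ℕ | 1 ≤ k ∧ ((k : ℝ) - μ N) / σ N ∈ K}))
      atTop (nhds 0) := by
  obtain ⟨C, ε, hε, hhε⟩ := hh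
  obtain ⟨M, hM⟩ := hbdd 3 le_rfl
  obtain ⟨R, hR⟩ := hK.isBounded.exists_norm_le
  have hπbar : 0 < πbar := one_pos.trans_le (one_le_of_hasSum_nat_mul hπ0 hπnn hπsum hmean)
  have hμ_top : Tendsto μ atTop atTop :=
    (hρc.const_mul_atTop hπbar).congr fun N => by rw [hμ, mul_div_assoc]
  have hsmall : Tendsto (fun N => ((σ N)⁻¹, C * ε N, d N / c N)) atTop (𝓝 (0, 0, 0)) := by
    refine .prodMk_nhds ?_ (.prodMk_nhds (by simpa using hε.const_mul C) hdc)
    exact (Real.tendsto_sqrt_atTop.comp hμ_top).inv_tendsto_atTop.congr fun N => by simp [hσ]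
  refine tendsto_sSup_image_abs_nhds_zero fun δ hδ => ?_
  have hP : IsCompact (K ×ˢ Icc (-R) R) := hK.prod isCompact_Icc
  filter_upwards [hμ_top.eventually_gt_atTop 0,
    hsmall.eventually (eventually_forall_generatorErrorBound_lt hf πbar v2 _ M hP hδ)]
    with N hμN hN
  rintro k ⟨-, hxK⟩
  obtain ⟨y, hy, hle⟩ := exists_abs_generator_sub_ou_le hπnn hmean hsecond hthird hf hM (hc N).ne'
    (hμ N) hμN (hσ N) (hhε N k)
  have hyR : |y| ≤ R := hy.trans ((Real.norm_eq_abs _).symm.trans_le (hR _ hxK))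
  exact hle.trans_lt (hN (_, y) ⟨hxK, abs_le.1 hyR⟩)

/-- Lemma (convergence of generators, logistic branching case): the generator of the
time-rescaled, centred and normalised logistic branching process, applied to a bounded
`C³` function `f`, converges uniformly on compact sets intersected with the lattice
`E_N` (restricted to states `x̂ ≥ 1`) to the generator
`-π̄ x f'(x) + ((v² + π̄)/2) f''(x)` of the Ornstein–Uhlenbeck process with drift
parameter `π̄` and variance parameter `v² + π̄`. -/
theorem logistic_generator_convergence
    (π : ℕ → ℝ) (hπ0 : π 0 = 0) (hπnn : ∀ j, 0 ≤ π j) (hπsum : ∑' j : ℕ, π j = 1)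
    (πbar v2 : ℝ)
    (hmean : HasSum (fun j : ℕ => (j : ℝ) * π j) πbar)
    (hsecond : HasSum (fun j : ℕ => (j : ℝ) ^ 2 * π j) v2)
    (hthird : Summable (fun j : ℕ => (j : ℝ) ^ 3 * π j))
    (ρ d c : ℕ → ℝ) (h : ℕ → ℕ → ℝ)
    (hρ : ∀ N, 0 < ρ N) (hd : ∀ N, 0 ≤ d N) (hc : ∀ N, 0 < c N)
    (hhpos : ∀ N k, 0 < h N k) (hhbdd : ∀ N, ∃ M : ℝ, ∀ k, h N k ≤ M)
    (μ σ : ℕ → ℝ)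
    (hμ : ∀ N, μ N = πbar * ρ N / c N) (hσ : ∀ N, σ N = Real.sqrt (μ N))
    (hρ0 : Tendsto ρ atTop (nhds 0))
    (hρc : Tendsto (fun N => ρ N / c N) atTop atTop)
    (hdc : Tendsto (fun N => d N / c N) atTop (nhds 0))
    (hh : ∃ C : ℝ, ∃ ε : ℕ → ℝ, Tendsto ε atTop (nhds 0) ∧
      ∀ N k, |h N k - 1| ≤ C * ε N * |(k : ℝ) - μ N| / μ N)
    (f : ℝ → ℝ) (hf : ContDiff ℝ 3 f)
    (hbdd : ∀ i : ℕ, i ≤ 3 → ∃ M : ℝ, ∀ x : ℝ, |iteratedDeriv i f x| ≤ M)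
    (K : Set ℝ) (hK : IsCompact K) :
    Tendsto (fun N : ℕ =>
      sSup ((fun k : ℕ =>
        |(∑' j : ℕ, h N k * (k : ℝ) * π j *
            (f (((k : ℝ) - μ N) / σ N + (j : ℝ) / σ N) - f (((k : ℝ) - μ N) / σ N)))
          + (ρ N)⁻¹ * (d N * (k : ℝ) + c N * (k : ℝ) * ((k : ℝ) - 1)) *
            (f (((k : ℝ) - μ N) / σ N - 1 / σ N) - f (((k : ℝ) - μ N) / σ N))
          - (-(πbar * (((k : ℝ) - μ N) / σ N) * deriv f (((k : ℝ) - μ N) / σ N))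
              + ((v2 + πbar) / 2) * iteratedDeriv 2 f (((k : ℝ) - μ N) / σ N))|)
        '' {k : ℕ | 1 ≤ k ∧ ((k : ℝ) - μ N) / σ N ∈ K}))
      atTop (nhds 0) :=
  logistic_generator_convergence_general π hπ0 hπnn hπsum πbar v2 hmean hsecond hthird ρ d c h hc μ
    σ hμ hσ hρc hdc hh f hf hbdd K hK
end

section
/- Diffusion coefficient asymptotics for the rescaled logistic branching process. Under the standing assumptions, for every compact set K ⊆ ℝ, writing x̂ := μ_N + x σ_N, one has lim_{N→∞} sup_{x ∈ E_N ∩ K, x̂ ≥ 1} | (1/(2 σ_N²)) ( v² h_N(x̂) x̂ + ρ_N^{−1} (d_N x̂ + c_N x̂ (x̂ − 1)) ) − (v² + π̄)/2 | = 0; that is, the normalised second-moment jump rate of the time-rescaled, centred and normalised logistic branching process converges to the Ornstein–Uhlenbeck diffusion coefficient (v² + π̄)/2, uniformly on compact sets intersected with the lattice E_N. -/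
/-!
If `K ⊆ [-R, R]`, a state `k` with `(k - μ_N)/σ_N ∈ K` satisfies
`|k/μ_N - 1| ≤ R/σ_N → 0` since `σ_N² = μ_N → ∞`, and the hypothesis on `h_N` then gives `h_N(k) → 1` uniformly.
Using `c_N μ_N = π̄ ρ_N`, the normalised rate minus `(v² + π̄)/2` equals
`v²/2 (h_N(k) t - 1) + (d_N/ρ_N) t/2 + π̄/2 (t² - t/μ_N - 1)` with `t = k/μ_N`,
and each term tends to `0` uniformly since `t → 1`, `d_N/ρ_N → 0` and `μ_N → ∞`.
-/

open Filter Topology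

/-- `Tendsto f (uniformlyIn l S) (𝓝 b)` says that `f (i, a) → b` along `l`, uniformly in
`a ∈ S i`. -/
def uniformlyIn {ι α : Type*} (l : Filter ι) (S : ι → Set α) : Filter (ι × α) :=
  l.comap Prod.fst ⊓ 𝓟 {p | p.2 ∈ S p.1}

section uniformlyIn

variable {ι α : Type*} {l : Filter ι} {S : ι → Set α}

theorem eventually_uniformlyIn_iff {P : ι × α → Prop} :
    (∀ᶠ p in uniformlyIn l S, P p) ↔ ∀ᶠ i in l, ∀ a ∈ S i, P (i, a) := by
  simp only [uniformlyIn, eventually_inf_principal, eventually_comap, Set.mem_ofPred_eq]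
  refine eventually_congr (Eventually.of_forall fun i => ⟨fun h a ha => h (i, a) rfl ha, ?_⟩)
  rintro h ⟨j, a⟩ rfl ha
  exact h a ha

theorem tendsto_fst_uniformlyIn : Tendsto Prod.fst (uniformlyIn l S) l :=
  tendsto_comap.mono_left inf_le_left

theorem tendsto_sSup_abs_image_of_tendsto_uniformlyIn {f : ι × α → ℝ}
    (hf : Tendsto f (uniformlyIn l S) (𝓝 0)) :
    Tendsto (fun i => sSup ((fun a => |f (i, a)|) '' S i)) l (𝓝 0) := by
  refine Metric.tendsto_nhds.2 fun ε hε => ?_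
  have hsmall := eventually_uniformlyIn_iff.1 (Metric.tendsto_nhds.1 hf (ε / 2) (half_pos hε))
  filter_upwards [hsmall] with i hi
  have hle : sSup ((fun a => |f (i, a)|) '' S i) ≤ ε / 2 := by
    refine Real.sSup_le ?_ (half_pos hε).le
    rintro _ ⟨a, ha, rfl⟩
    simpa using (hi a ha).le
  have hnonneg : 0 ≤ sSup ((fun a => |f (i, a)|) '' S i) :=
    Real.sSup_nonneg (by rintro _ ⟨a, -, rfl⟩; exact abs_nonneg _)
  rw [Real.dist_eq, sub_zero, abs_of_nonneg hnonneg]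
  linarith

end uniformlyIn

theorem one_le_of_hasSum_natCast_mul {π : ℕ → ℝ} {m : ℝ} (hπ0 : π 0 = 0)
    (hπnn : ∀ j, 0 ≤ π j) (hπsum : ∑' j, π j = 1) (hmean : HasSum (fun j : ℕ => (j : ℝ) * π j) m) :
    1 ≤ m := by
  have hle : ∀ j : ℕ, π j ≤ j * π j := by
    rintro (_ | j)
    · simp [hπ0]
    · exact le_mul_of_one_le_left (hπnn _) (by simp)
  have hsum : HasSum π 1 :=
    hπsum ▸ (Summable.of_nonneg_of_le hπnn hle hmean.summable).hasSum
  exact hasSum_le hle hsum hmean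

section relativeDeviation

variable {ι : Type*} {l : Filter ι} {μ : ι → ℝ} {S : ι → Set ℕ}

theorem tendsto_relative_deviation_uniformlyIn (hμ : Tendsto μ l atTop) {K : Set ℝ}
    (hK : Bornology.IsBounded K) (hS : ∀ i, ∀ k ∈ S i, ((k : ℝ) - μ i) / √(μ i) ∈ K) :
    Tendsto (fun p : ι × ℕ => ((p.2 : ℝ) - μ p.1) / μ p.1) (uniformlyIn l S) (𝓝 0) := by
  obtain ⟨R, hR⟩ := hK.subset_closedBall 0
  have hbound : Tendsto (fun i => R / √(μ i)) l (𝓝 0) :=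
    tendsto_const_nhds.div_atTop (Real.tendsto_sqrt_atTop.comp hμ)
  refine squeeze_zero_norm' ?_ (hbound.comp tendsto_fst_uniformlyIn)
  refine eventually_uniformlyIn_iff.2 ?_
  filter_upwards [hμ.eventually_gt_atTop 0] with i hμi k hk
  have hx : |((k : ℝ) - μ i) / √(μ i)| ≤ R := by
    simpa only [Metric.mem_closedBall, dist_zero_right, Real.norm_eq_abs] using hR (hS i k hk)
  have hsplit : ((k : ℝ) - μ i) / μ i = ((k : ℝ) - μ i) / √(μ i) / √(μ i) := by
    rw [div_div, Real.mul_self_sqrt hμi.le]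
  rw [Real.norm_eq_abs, hsplit, abs_div, abs_of_pos (Real.sqrt_pos.2 hμi)]
  exact div_le_div_of_nonneg_right hx (Real.sqrt_nonneg _)

theorem tendsto_div_uniformlyIn_of_relative_deviation (hμ : Tendsto μ l atTop)
    (hdev : Tendsto (fun p : ι × ℕ => ((p.2 : ℝ) - μ p.1) / μ p.1) (uniformlyIn l S) (𝓝 0)) :
    Tendsto (fun p : ι × ℕ => (p.2 : ℝ) / μ p.1) (uniformlyIn l S) (𝓝 1) := by
  have hshift : Tendsto (fun p : ι × ℕ => 1 + ((p.2 : ℝ) - μ p.1) / μ p.1)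
      (uniformlyIn l S) (𝓝 1) := by
    simpa using hdev.const_add 1
  refine hshift.congr' ?_
  filter_upwards [(hμ.comp tendsto_fst_uniformlyIn).eventually_gt_atTop 0] with p (hp : 0 < μ p.1)
  field_simp
  ring

theorem tendsto_one_uniformlyIn_of_abs_sub_one_le
    (hdev : Tendsto (fun p : ι × ℕ => ((p.2 : ℝ) - μ p.1) / μ p.1) (uniformlyIn l S) (𝓝 0))
    {h : ι → ℕ → ℝ} {C : ℝ} {ε : ι → ℝ} (hε : Tendsto ε l (𝓝 0))
    (hh : ∀ i k, |h i k - 1| ≤ C * ε i * |(k : ℝ) - μ i| / μ i) :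
    Tendsto (fun p : ι × ℕ => h p.1 p.2) (uniformlyIn l S) (𝓝 1) := by
  have hbound : Tendsto (fun p : ι × ℕ => |C * ε p.1| * |((p.2 : ℝ) - μ p.1) / μ p.1|)
      (uniformlyIn l S) (𝓝 0) := by
    simpa using ((hε.comp tendsto_fst_uniformlyIn).const_mul C).abs.mul hdev.abs
  refine tendsto_iff_norm_sub_tendsto_zero.2
    (squeeze_zero (fun _ => norm_nonneg _) (fun p => ?_) hbound)
  calc ‖h p.1 p.2 - 1‖ ≤ |C * ε p.1 * |(p.2 : ℝ) - μ p.1| / μ p.1| :=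
        (hh p.1 p.2).trans (le_abs_self _)
    _ = |C * ε p.1| * |((p.2 : ℝ) - μ p.1) / μ p.1| := by
        rw [mul_div_assoc, abs_mul, abs_div, abs_div, abs_abs]

end relativeDeviation

theorem tendsto_div_of_tendsto_div_atTop {ι : Type*} {l : Filter ι} {d ρ c : ι → ℝ}
    (hdc : Tendsto (fun i => d i / c i) l (𝓝 0)) (hρc : Tendsto (fun i => ρ i / c i) l atTop) :
    Tendsto (fun i => d i / ρ i) l (𝓝 0) := by
  refine (hdc.div_atTop hρc).congr' ?_
  filter_upwards [hρc.eventually_gt_atTop 0] with i hi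
  exact div_div_div_cancel_right₀ (fun hc0 => by simp [hc0] at hi) _ _

theorem logistic_rate_sub_eq {v2 πbar H k d ρ c μ : ℝ} (hμ : μ = πbar * ρ / c) (hμ0 : μ ≠ 0) :
    1 / (2 * μ) * (v2 * H * k + ρ⁻¹ * (d * k + c * k * (k - 1))) - (v2 + πbar) / 2
      = v2 / 2 * (H * (k / μ) - 1) + d / ρ * (k / μ) / 2
        + πbar / 2 * (k / μ * (k / μ) - k / μ * μ⁻¹ - 1) := by
  have hρ : ρ ≠ 0 := by rintro rfl; simp [hμ] at hμ0
  have hc : c ≠ 0 := by rintro rfl; simp [hμ] at hμ0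
  have hπ : πbar ≠ 0 := by rintro rfl; simp [hμ] at hμ0
  have hcμ : c = πbar * ρ / μ := by rw [hμ]; field_simp
  subst hcμ
  field_simp
  ring

theorem tendsto_logistic_rate_sub {β : Type*} {L : Filter β} (v2 πbar : ℝ) {H t b m : β → ℝ}
    (hH : Tendsto H L (𝓝 1)) (ht : Tendsto t L (𝓝 1)) (hb : Tendsto b L (𝓝 0))
    (hm : Tendsto m L (𝓝 0)) :
    Tendsto (fun x => v2 / 2 * (H x * t x - 1) + b x * t x / 2
      + πbar / 2 * (t x * t x - t x * m x - 1)) L (𝓝 0) := by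
  have := ((((hH.mul ht).sub_const 1).const_mul (v2 / 2)).add ((hb.mul ht).div_const 2)).add
    ((((ht.mul ht).sub (ht.mul hm)).sub_const 1).const_mul (πbar / 2))
  simpa using this

theorem logistic_diffusion_asymptotics_general
    (π : ℕ → ℝ) (hπ0 : π 0 = 0) (hπnn : ∀ j, 0 ≤ π j) (hπsum : ∑' j : ℕ, π j = 1)
    (πbar v2 : ℝ)
    (hmean : HasSum (fun j : ℕ => (j : ℝ) * π j) πbar)
    (ρ d c : ℕ → ℝ) (h : ℕ → ℕ → ℝ)
    (μ σ : ℕ → ℝ)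
    (hμ : ∀ N, μ N = πbar * ρ N / c N) (hσ : ∀ N, σ N = Real.sqrt (μ N))
    (hρc : Tendsto (fun N => ρ N / c N) atTop atTop)
    (hdc : Tendsto (fun N => d N / c N) atTop (nhds 0))
    (hh : ∃ C : ℝ, ∃ ε : ℕ → ℝ, Tendsto ε atTop (nhds 0) ∧
      ∀ N k, |h N k - 1| ≤ C * ε N * |(k : ℝ) - μ N| / μ N)
    (K : Set ℝ) (hK : IsCompact K) :
    Tendsto (fun N : ℕ =>
      sSup ((fun k : ℕ =>
        |(1 / (2 * (σ N) ^ 2)) * (v2 * h N k * (k : ℝ)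
            + (ρ N)⁻¹ * (d N * (k : ℝ) + c N * (k : ℝ) * ((k : ℝ) - 1)))
          - (v2 + πbar) / 2|)
        '' {k : ℕ | 1 ≤ k ∧ ((k : ℝ) - μ N) / σ N ∈ K}))
      atTop (nhds 0) := by
  obtain ⟨C, ε, hε, hεh⟩ := hh
  set S : ℕ → Set ℕ := fun N => {k : ℕ | 1 ≤ k ∧ ((k : ℝ) - μ N) / σ N ∈ K}
  have hπbar : 0 < πbar := one_pos.trans_le (one_le_of_hasSum_natCast_mul hπ0 hπnn hπsum hmean)
  have hμtop : Tendsto μ atTop atTop :=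
    (hρc.const_mul_atTop hπbar).congr fun N => by rw [hμ N, mul_div_assoc]
  have hμ_fst := hμtop.comp (tendsto_fst_uniformlyIn (S := S))
  have hdev := tendsto_relative_deviation_uniformlyIn (l := atTop) hμtop hK.isBounded
    (S := S) fun N k hk => hσ N ▸ hk.2
  have hlim := tendsto_logistic_rate_sub v2 πbar
    (tendsto_one_uniformlyIn_of_abs_sub_one_le hdev hε hεh)
    (tendsto_div_uniformlyIn_of_relative_deviation hμtop hdev)
    ((tendsto_div_of_tendsto_div_atTop hdc hρc).comp tendsto_fst_uniformlyIn)
    hμ_fst.inv_tendsto_atTop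
  refine tendsto_sSup_abs_image_of_tendsto_uniformlyIn (f := fun p : ℕ × ℕ =>
    1 / (2 * σ p.1 ^ 2) * (v2 * h p.1 p.2 * p.2
      + (ρ p.1)⁻¹ * (d p.1 * p.2 + c p.1 * p.2 * (p.2 - 1))) - (v2 + πbar) / 2) (hlim.congr' ?_)
  filter_upwards [hμ_fst.eventually_gt_atTop 0] with p (hp : 0 < μ p.1)
  rw [hσ, Real.sq_sqrt hp.le]
  exact (logistic_rate_sub_eq (hμ p.1) hp.ne').symm

/-- Diffusion coefficient asymptotics for the rescaled logistic branching process: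
the normalised second-moment jump rate converges to the Ornstein–Uhlenbeck diffusion
coefficient `(v² + π̄)/2`, uniformly on compact sets intersected with the lattice
`E_N` (states `x̂ ≥ 1`). -/
theorem logistic_diffusion_asymptotics
    (π : ℕ → ℝ) (hπ0 : π 0 = 0) (hπnn : ∀ j, 0 ≤ π j) (hπsum : ∑' j : ℕ, π j = 1)
    (πbar v2 : ℝ)
    (hmean : HasSum (fun j : ℕ => (j : ℝ) * π j) πbar)
    (hsecond : HasSum (fun j : ℕ => (j : ℝ) ^ 2 * π j) v2)
    (hthird : Summable (fun j : ℕ => (j : ℝ) ^ 3 * π j))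
    (ρ d c : ℕ → ℝ) (h : ℕ → ℕ → ℝ)
    (hρ : ∀ N, 0 < ρ N) (hd : ∀ N, 0 ≤ d N) (hc : ∀ N, 0 < c N)
    (hhpos : ∀ N k, 0 < h N k) (hhbdd : ∀ N, ∃ M : ℝ, ∀ k, h N k ≤ M)
    (μ σ : ℕ → ℝ)
    (hμ : ∀ N, μ N = πbar * ρ N / c N) (hσ : ∀ N, σ N = Real.sqrt (μ N))
    (hρ0 : Tendsto ρ atTop (nhds 0))
    (hρc : Tendsto (fun N => ρ N / c N) atTop atTop)
    (hdc : Tendsto (fun N => d N / c N) atTop (nhds 0))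
    (hh : ∃ C : ℝ, ∃ ε : ℕ → ℝ, Tendsto ε atTop (nhds 0) ∧
      ∀ N k, |h N k - 1| ≤ C * ε N * |(k : ℝ) - μ N| / μ N)
    (K : Set ℝ) (hK : IsCompact K) :
    Tendsto (fun N : ℕ =>
      sSup ((fun k : ℕ =>
        |(1 / (2 * (σ N) ^ 2)) * (v2 * h N k * (k : ℝ)
            + (ρ N)⁻¹ * (d N * (k : ℝ) + c N * (k : ℝ) * ((k : ℝ) - 1)))
          - (v2 + πbar) / 2|)
        '' {k : ℕ | 1 ≤ k ∧ ((k : ℝ) - μ N) / σ N ∈ K}))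
      atTop (nhds 0) :=
  logistic_diffusion_asymptotics_general π hπ0 hπnn hπsum πbar v2 hmean ρ d c h μ σ hμ hσ hρc hdc hh
    K hK
end

section
/- Lemma (sign of the one-step drift of the embedded chain, logistic case). Under the standing assumptions there exist η > 0 and N₀ ∈ ℕ such that for all N ≥ N₀: (i) for every integer x with x ≥ μ_N + η σ_N one has ρ_N π̄ h_N(x) − d_N − c_N (x − 1) < 0, and (ii) for every integer x with 1 ≤ x ≤ μ_N − η σ_N one has ρ_N π̄ h_N(x) − d_N − c_N (x − 1) > 0. Equivalently, the expected one-step displacement Δ_x^N = Σ_y p_N(x,y)(y − x) of the embedded (jump) Markov chain of X^N, which equals x (ρ_N π̄ h_N(x) − d_N − c_N (x − 1)) divided by the total jump rate x (d_N + ρ_N h_N(x) + c_N (x − 1)), is negative for all x ≥ μ_N + η σ_N and positive for all 1 ≤ x ≤ μ_N − η σ_N. -/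
open Filter

/-- Lemma (sign of the one-step drift of the embedded chain, logistic case):
there exist `η > 0` and `N₀` such that for all `N ≥ N₀` the quantity
`ρ_N π̄ h_N(x) − d_N − c_N (x − 1)` (whose sign is the sign of the expected one-step
displacement of the embedded jump chain of the logistic branching process) is negative
for every integer `x ≥ μ_N + η σ_N` and positive for every integer
`1 ≤ x ≤ μ_N − η σ_N`. -/
theorem logistic_embedded_drift_sign
    (π : ℕ → ℝ) (hπ0 : π 0 = 0) (hπnn : ∀ j, 0 ≤ π j) (hπsum : ∑' j : ℕ, π j = 1)
    (πbar v2 : ℝ)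
    (hmean : HasSum (fun j : ℕ => (j : ℝ) * π j) πbar)
    (hsecond : HasSum (fun j : ℕ => (j : ℝ) ^ 2 * π j) v2)
    (hthird : Summable (fun j : ℕ => (j : ℝ) ^ 3 * π j))
    (ρ d c : ℕ → ℝ) (h : ℕ → ℕ → ℝ)
    (hρ : ∀ N, 0 < ρ N) (hd : ∀ N, 0 ≤ d N) (hc : ∀ N, 0 < c N)
    (hhpos : ∀ N k, 0 < h N k) (hhbdd : ∀ N, ∃ M : ℝ, ∀ k, h N k ≤ M)
    (μ σ : ℕ → ℝ)
    (hμ : ∀ N, μ N = πbar * ρ N / c N) (hσ : ∀ N, σ N = Real.sqrt (μ N))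
    (hρ0 : Tendsto ρ atTop (nhds 0))
    (hρc : Tendsto (fun N => ρ N / c N) atTop atTop)
    (hdc : Tendsto (fun N => d N / c N) atTop (nhds 0))
    (hh : ∃ C : ℝ, ∃ ε : ℕ → ℝ, Tendsto ε atTop (nhds 0) ∧
      ∀ N k, |h N k - 1| ≤ C * ε N * |(k : ℝ) - μ N| / μ N) :
    ∃ η : ℝ, 0 < η ∧ ∃ N₀ : ℕ, ∀ N : ℕ, N₀ ≤ N →
      (∀ x : ℕ, μ N + η * σ N ≤ (x : ℝ) →
        ρ N * πbar * h N x - d N - c N * ((x : ℝ) - 1) < 0) ∧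
      (∀ x : ℕ, 1 ≤ x → (x : ℝ) ≤ μ N - η * σ N →
        0 < ρ N * πbar * h N x - d N - c N * ((x : ℝ) - 1)) := by
  obtain ⟨C, ε, hε0, hεbd⟩ := hh
  -- π is summable and πbar ≥ 1
  have hπsummable : Summable π := by
    apply Summable.of_nonneg_of_le hπnn _ hmean.summable
    intro j
    rcases Nat.eq_zero_or_pos j with h0 | h1
    · simp [h0, hπ0]
    · have hj : (1:ℝ) ≤ (j:ℝ) := by exact_mod_cast h1
      nlinarith [hπnn j]
  have hπ1 : HasSum π 1 := by rw [← hπsum]; exact hπsummable.hasSum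
  have hπbar1 : (1:ℝ) ≤ πbar := by
    refine hasSum_le ?_ hπ1 hmean
    intro j
    rcases Nat.eq_zero_or_pos j with h0 | h1
    · simp [h0, hπ0]
    · have hj : (1:ℝ) ≤ (j:ℝ) := by exact_mod_cast h1
      nlinarith [hπnn j]
  have hA : ∀ᶠ N in atTop, |C * ε N| < 1/2 := by
    have hT : Tendsto (fun N => |C * ε N|) atTop (nhds 0) := by
      simpa using (hε0.const_mul C).abs
    exact hT.eventually_lt_const (by norm_num)
  have hB : ∀ᶠ N in atTop, d N / c N < 1/2 :=
    hdc.eventually_lt_const (by norm_num)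
  have hC4 : ∀ᶠ N in atTop, (4:ℝ) ≤ ρ N / c N := hρc.eventually_ge_atTop 4
  obtain ⟨N₀, hN₀⟩ := eventually_atTop.mp ((hA.and hB).and hC4)
  refine ⟨2, by norm_num, N₀, fun N hN => ?_⟩
  obtain ⟨⟨hAe, hBe⟩, hCe⟩ := hN₀ N hN
  have hcpos := hc N
  set m := μ N with hmdef
  have hm : m = πbar * (ρ N / c N) := by rw [hmdef, hμ, mul_div_assoc]
  have hm4 : (4:ℝ) ≤ m := by nlinarith [hCe, hπbar1]
  have hs2 : Real.sqrt m ^ 2 = m := Real.sq_sqrt (by linarith)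
  have hsge : (2:ℝ) ≤ Real.sqrt m := by
    nlinarith [Real.sqrt_nonneg m, hs2]
  have hρπ : ρ N * πbar = c N * m := by
    rw [hmdef, hμ N]; field_simp
  have hq0 : 0 ≤ d N / c N := div_nonneg (hd N) hcpos.le
  have key : ∀ x : ℕ, ρ N * πbar * h N x - d N - c N * ((x : ℝ) - 1)
      = c N * (m * h N x - d N / c N - ((x : ℝ) - 1)) := by
    intro x
    have h1 : c N * (d N / c N) = d N := by field_simp
    linear_combination h N x * hρπ + h1
  have habs : ∀ x : ℕ, |m * h N x - m| ≤ (1/2) * |(x:ℝ) - m| := by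
    intro x
    have hb := hεbd N x
    have h2 : |h N x - 1| * m ≤ C * ε N * |(x:ℝ) - m| :=
      (le_div_iff₀ (by linarith : (0:ℝ) < m)).mp hb
    have h1 : C * ε N * |(x:ℝ) - m| ≤ (1/2) * |(x:ℝ) - m| := by
      nlinarith [abs_nonneg ((x:ℝ) - m), le_abs_self (C * ε N), hAe.le]
    calc |m * h N x - m| = |h N x - 1| * m := by
          rw [show m * h N x - m = (h N x - 1) * m by ring, abs_mul,
            abs_of_nonneg (by linarith : (0:ℝ) ≤ m)]
      _ ≤ (1/2) * |(x:ℝ) - m| := le_trans h2 h1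
  constructor
  · intro x hx
    rw [hσ] at hx
    obtain ⟨hlo, hhi⟩ := abs_le.mp (habs x)
    have hxm : (4:ℝ) ≤ (x:ℝ) - m := by nlinarith [hsge]
    have habsx : |(x:ℝ) - m| = (x:ℝ) - m := abs_of_nonneg (by linarith)
    rw [habsx] at hhi
    rw [key x]
    have hG : m * h N x - d N / c N - ((x:ℝ) - 1) < 0 := by linarith
    exact mul_neg_of_pos_of_neg hcpos hG
  · intro x hx1 hx2
    rw [hσ] at hx2
    obtain ⟨hlo, hhi⟩ := abs_le.mp (habs x)
    have hxm : (4:ℝ) ≤ m - (x:ℝ) := by nlinarith [hsge]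
    have habsx : |(x:ℝ) - m| = m - (x:ℝ) := by
      rw [abs_sub_comm]; exact abs_of_nonneg (by linarith)
    rw [habsx] at hlo
    rw [key x]
    have hG : 0 < m * h N x - d N / c N - ((x:ℝ) - 1) := by linarith
    exact mul_pos hcpos hG
end

section
/- Sign of the one-step drift of the embedded chain of the Moran line counting process. Assume strong or moderately strong selection. Then for every λ > 0 there exists N₀ ∈ ℕ such that for all N ≥ N₀: (i) for every real x with μ_N + λ σ_N ≤ x ≤ N one has s_N (1 − x/N) − (γ/(2N)) (x − 1) < 0, and (ii) for every real x with 1 ≤ x ≤ μ_N − λ σ_N one has s_N (1 − x/N) − (γ/(2N)) (x − 1) > 0. Consequently the expected one-step displacement Δ_x^N of the embedded jump chain of B^N, which is a positive multiple of x s_N (1 − x/N) − (γ/N)·x(x−1)/2, is negative for all integer states x ≥ μ_N + λ σ_N and positive for all integer states 1 ≤ x ≤ μ_N − λ σ_N. -/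
open Filter

/-- Sign of the one-step drift of the embedded chain of the Moran line counting process:
under strong or moderately strong selection, for every `λ > 0` there is `N₀` such that
for all `N ≥ N₀` the quantity `s_N (1 − x/N) − (γ/(2N))(x − 1)` (whose sign is the sign
of the expected one-step displacement of the embedded jump chain of `B^N`) is negative
for all `μ_N + λ σ_N ≤ x ≤ N` and positive for all `1 ≤ x ≤ μ_N − λ σ_N`. -/
theorem moran_embedded_drift_sign
    (γ : ℝ) (hγ : 0 < γ) (s : ℕ → ℝ) (hs : ∀ N, 0 < s N)
    (hconv : ∃ l : ℝ, 0 ≤ l ∧ Tendsto s atTop (nhds l))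
    (hNs : Tendsto (fun N : ℕ => (N : ℝ) * s N) atTop atTop)
    (μ σ : ℕ → ℝ)
    (hμ : ∀ N : ℕ, μ N = 2 * s N * N / (2 * s N + γ))
    (hσ : ∀ N : ℕ, σ N =
      Real.sqrt ((2 * s N / (2 * s N + γ)) * (1 - 2 * s N / (2 * s N + γ)) * N)) :
    ∀ lam : ℝ, 0 < lam → ∃ N₀ : ℕ, ∀ N : ℕ, N₀ ≤ N →
      (∀ x : ℝ, μ N + lam * σ N ≤ x → x ≤ N →
        s N * (1 - x / N) - (γ / (2 * N)) * (x - 1) < 0) ∧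
      (∀ x : ℝ, 1 ≤ x → x ≤ μ N - lam * σ N →
        0 < s N * (1 - x / N) - (γ / (2 * N)) * (x - 1)) := by
  intro lam hlam
  have h1 := hNs.eventually_gt_atTop (γ / (2 * lam ^ 2))
  rw [Filter.eventually_atTop] at h1
  obtain ⟨N₁, hN₁⟩ := h1
  refine ⟨max N₁ 1, fun N hN => ?_⟩
  have hN1 : 1 ≤ N := le_trans (le_max_right _ _) hN
  have hNss : γ / (2 * lam ^ 2) < N * s N := hN₁ N (le_trans (le_max_left _ _) hN)
  have hNpos : (0 : ℝ) < N := by exact_mod_cast hN1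
  have hsN := hs N
  have hd : 0 < 2 * s N + γ := by linarith
  have key : ∀ x : ℝ, s N * (1 - x / N) - (γ / (2 * N)) * (x - 1)
      = ((2 * N * s N + γ) - (2 * s N + γ) * x) / (2 * N) := by
    intro x; field_simp; ring
  have hsig : γ < 2 * lam ^ 2 * (N * s N) := by
    have h2 : 0 < 2 * lam ^ 2 := by positivity
    have := (div_lt_iff₀' h2).mp hNss
    linarith
  have hσpos : γ / (2 * s N + γ) < lam * σ N := by
    rw [hσ]
    have hA : ((2 * s N / (2 * s N + γ)) * (1 - 2 * s N / (2 * s N + γ)) * (N : ℝ))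
        = 2 * s N * γ * N / (2 * s N + γ) ^ 2 := by field_simp; ring
    rw [hA]
    have h3 : γ / (2 * s N + γ) / lam < Real.sqrt (2 * s N * γ * N / (2 * s N + γ) ^ 2) := by
      rw [Real.lt_sqrt (by positivity)]
      rw [div_div, div_pow, div_lt_div_iff₀ (by positivity) (by positivity)]
      have h6 : 0 < γ * (2 * s N + γ) ^ 2 := by positivity
      nlinarith [mul_lt_mul_of_pos_left hsig h6]
    calc γ / (2 * s N + γ) = lam * (γ / (2 * s N + γ) / lam) := by field_simp
    _ < lam * Real.sqrt _ := by exact mul_lt_mul_of_pos_left h3 hlam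
  have hμval : (2 * s N + γ) * μ N = 2 * s N * N := by
    rw [hμ]; field_simp
  constructor
  · intro x hx1 hx2
    rw [key]
    apply div_neg_of_neg_of_pos _ (by positivity)
    have h4 : (2 * s N + γ) * (μ N + lam * σ N) ≤ (2 * s N + γ) * x :=
      mul_le_mul_of_nonneg_left hx1 (le_of_lt hd)
    have h5 : γ < (2 * s N + γ) * (lam * σ N) := by
      have := (div_lt_iff₀' hd).mp hσpos
      linarith
    nlinarith [h4, h5, hμval]
  · intro x hx1 hx2
    rw [key]
    apply div_pos _ (by positivity)
    have h4 : (2 * s N + γ) * x ≤ (2 * s N + γ) * (μ N - lam * σ N) :=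
      mul_le_mul_of_nonneg_left hx2 (le_of_lt hd)
    have h5 : 0 < (2 * s N + γ) * (lam * σ N) := by
      have : 0 < γ / (2 * s N + γ) := by positivity
      nlinarith
    nlinarith [h4, h5, hμval]
end

section
/- Lemma (maximal deviation inequality for the embedded chain of the logistic branching process). Under the standing assumptions, let η > 0 be the constant from the drift-sign lemma (so that the one-step drift of the embedded chain points towards μ_N outside the window [μ_N − η σ_N, μ_N + η σ_N]). Let λ > 2η and η' > λ. Then there exists N₀ ∈ ℕ such that for all N ≥ N₀, every starting state x ∈ [μ_N − λ σ_N, μ_N + λ σ_N] ∩ ℕ and every n ∈ ℕ, any discrete-time Markov chain (M_k)_{k≥0} with transition kernel p_N and M_0 = x satisfies P_x( max_{0 ≤ k ≤ n} |M_k − μ_N| > η' σ_N ) ≤ (2 v² / (η' − λ)²) · n / σ_N². -/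
/-!
Let `W` be the squared distance from the window `[μ_N - λσ_N, μ_N + λσ_N]`. Expanding `W` around
the current state, one step of the embedded chain raises `E W` by at most the second moment
(`≤ v²`) of a jump, because the linear term is twice the signed distance times the drift: it
vanishes inside the window and is `≤ 0` outside, where the drift points back towards `μ_N` as
`λ > η`. So the expectation of `W` on the paths that have not yet left the `η'σ_N`-window, plus
`((η' - λ)σ_N)²` times the probability of having left it, grows by at most `v²` per step from its
initial value `W(x) = 0`.
-/

open Filter MeasureTheory Finset
open scoped ENNReal

namespace MarkovChain

variable {Ω α : Type*}

def path (M : ℕ → Ω → α) (k : ℕ) (ω : Ω) : Fin (k + 1) → α := fun i => M i ω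

lemma path_preimage_singleton (M : ℕ → Ω → α) (k : ℕ) (hist : Fin (k + 1) → α) :
    path M k ⁻¹' {hist} = {ω | ∀ i : Fin (k + 1), M i.val ω = hist i} := by
  ext ω
  simp [path, funext_iff]

lemma path_succ_preimage_singleton_snoc (M : ℕ → Ω → α) (k : ℕ) (hist : Fin (k + 1) → α)
    (y : α) : path M (k + 1) ⁻¹' {Fin.snoc hist y}
      = {ω | (∀ i : Fin (k + 1), M i.val ω = hist i) ∧ M (k + 1) ω = y} := by
  ext ω
  simp [path, funext_iff, Fin.forall_fin_succ', and_comm]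

def avoidSet (B : Set α) (k : ℕ) : Set (Fin (k + 1) → α) := {hist | ∀ i, hist i ∉ B}

def firstHitSet (B : Set α) (k : ℕ) : Set (Fin (k + 1) → α) :=
  {hist | (∀ i : Fin k, hist i.castSucc ∉ B) ∧ hist (Fin.last k) ∈ B}

lemma snoc_mem_avoidSet {B : Set α} {k : ℕ} {hist : Fin (k + 1) → α} {y : α} :
    Fin.snoc hist y ∈ avoidSet B (k + 1) ↔ hist ∈ avoidSet B k ∧ y ∉ B := by
  simp [avoidSet, Fin.forall_fin_succ']

lemma snoc_mem_firstHitSet {B : Set α} {k : ℕ} {hist : Fin (k + 1) → α} {y : α} :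
    Fin.snoc hist y ∈ firstHitSet B (k + 1) ↔ hist ∈ avoidSet B k ∧ y ∈ B := by
  simp [firstHitSet, avoidSet]

lemma setOf_exists_le_mem_subset (M : ℕ → Ω → α) (B : Set α) (n : ℕ) :
    {ω | ∃ k ≤ n, M k ω ∈ B} ⊆ ⋃ j ∈ range (n + 1), path M j ⁻¹' firstHitSet B j := by
  classical
  rintro ω ⟨k, hkn, hk⟩
  have hex : ∃ j, M j ω ∈ B := ⟨k, hk⟩
  simp only [Set.mem_iUnion, mem_range, Set.mem_preimage]
  refine ⟨Nat.find hex, by linarith [Nat.find_min' hex hk], fun i => ?_, Nat.find_spec hex⟩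
  exact Nat.find_min hex (by simpa using i.isLt)

variable {p : α → α → ℝ≥0∞} {W : α → ℝ≥0∞} {B : Set α} {a b : ℝ≥0∞}

noncomputable def avoidWeight (B : Set α) (W : α → ℝ≥0∞) (k : ℕ) : (Fin (k + 1) → α) → ℝ≥0∞ :=
  (avoidSet B k).indicator fun hist => W (hist (Fin.last k))

lemma tsum_mul_avoidWeight_add_firstHit_le (hW : ∀ l ∉ B, ∑' y, p l y * W y ≤ W l + b)
    (haW : ∀ y ∈ B, a ≤ W y) {k : ℕ} (hist : Fin (k + 1) → α) :
    ∑' y, p (hist (Fin.last k)) y * (avoidWeight B W (k + 1) (Fin.snoc hist y)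
        + (firstHitSet B (k + 1)).indicator (fun _ => a) (Fin.snoc hist y))
      ≤ avoidWeight B W k hist + b := by
  by_cases hA : hist ∈ avoidSet B k
  · calc _ ≤ ∑' y, p (hist (Fin.last k)) y * W y := by
          gcongr with y
          by_cases hy : y ∈ B <;>
            simp [avoidWeight, snoc_mem_avoidSet, snoc_mem_firstHitSet, hA, hy, haW y]
      _ ≤ _ := hW _ (hA (Fin.last k))
      _ = _ := by simp [avoidWeight, hA]
  · simp [avoidWeight, snoc_mem_avoidSet, snoc_mem_firstHitSet, hA]

variable [MeasurableSpace Ω]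

def IsMarkovChain (P : Measure Ω) (M : ℕ → Ω → α) (p : α → α → ℝ≥0∞) : Prop :=
  ∀ k (hist : Fin (k + 1) → α) y,
    P (path M (k + 1) ⁻¹' {Fin.snoc hist y}) = p (hist (Fin.last k)) y * P (path M k ⁻¹' {hist})

variable [MeasurableSpace α]

lemma measurable_path {M : ℕ → Ω → α} (hM : ∀ k, Measurable (M k)) (k : ℕ) :
    Measurable (path M k) :=
  measurable_pi_lambda _ fun i => hM i

variable [MeasurableSingletonClass α] [Countable α] {P : Measure Ω} {M : ℕ → Ω → α}

lemma lintegral_path_succ (hM : ∀ k, Measurable (M k))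
    (hMarkov : IsMarkovChain P M p)
    (k : ℕ) (f : (Fin (k + 2) → α) → ℝ≥0∞) :
    ∫⁻ ω, f (path M (k + 1) ω) ∂P
      = ∫⁻ ω, ∑' y, p (M k ω) y * f (Fin.snoc (path M k ω) y) ∂P := by
  let g (hist : Fin (k + 1) → α) := ∑' y, p (hist (Fin.last k)) y * f (Fin.snoc hist y)
  change _ = ∫⁻ ω, g (path M k ω) ∂P
  rw [← lintegral_map (measurable_of_countable f) (measurable_path hM _), lintegral_countable',
    ← lintegral_map (measurable_of_countable g) (measurable_path hM _),
    lintegral_countable', ← (Fin.snocEquiv fun _ => α).tsum_eq, ENNReal.tsum_prod',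
    ENNReal.tsum_comm]
  refine tsum_congr fun hist => ?_
  rw [← ENNReal.tsum_mul_right]
  refine tsum_congr fun y => ?_
  simp only [Fin.snocEquiv, Equiv.coe_fn_mk]
  rw [Measure.map_apply (measurable_path hM _) (measurableSet_singleton _),
    Measure.map_apply (measurable_path hM _) (measurableSet_singleton _), hMarkov k hist y]
  ring

lemma mul_measure_preimage_path_eq_lintegral (hM : ∀ k, Measurable (M k)) (k : ℕ)
    (S : Set (Fin (k + 1) → α)) (a : ℝ≥0∞) :
    a * P (path M k ⁻¹' S) = ∫⁻ ω, S.indicator (fun _ => a) (path M k ω) ∂P := by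
  rw [← lintegral_indicator_const (measurable_path hM k (Set.to_countable S).measurableSet)]
  rfl

lemma lintegral_avoidWeight_succ_add_le [IsProbabilityMeasure P] (hM : ∀ k, Measurable (M k))
    (hMarkov : IsMarkovChain P M p)
    (hW : ∀ l ∉ B, ∑' y, p l y * W y ≤ W l + b) (haW : ∀ y ∈ B, a ≤ W y) (k : ℕ) :
    ∫⁻ ω, avoidWeight B W (k + 1) (path M (k + 1) ω) ∂P
        + a * P (path M (k + 1) ⁻¹' firstHitSet B (k + 1))
      ≤ ∫⁻ ω, avoidWeight B W k (path M k ω) ∂P + b := by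
  have hmeas : ∀ j (f : (Fin (j + 1) → α) → ℝ≥0∞), Measurable fun ω => f (path M j ω) :=
    fun j f => (measurable_of_countable f).comp (measurable_path hM j)
  rw [mul_measure_preimage_path_eq_lintegral hM, ← lintegral_add_left (hmeas _ _),
    lintegral_path_succ hM hMarkov k fun hist => avoidWeight B W (k + 1) hist
      + (firstHitSet B (k + 1)).indicator (fun _ => a) hist]
  calc _ ≤ ∫⁻ ω, avoidWeight B W k (path M k ω) + b ∂P :=
        lintegral_mono fun ω => tsum_mul_avoidWeight_add_firstHit_le hW haW (path M k ω)
    _ = _ := by simp [lintegral_add_right _ measurable_const]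

lemma lintegral_avoidWeight_add_sum_le [IsProbabilityMeasure P] (hM : ∀ k, Measurable (M k))
    {x : α} (hM0 : ∀ ω, M 0 ω = x)
    (hMarkov : IsMarkovChain P M p)
    (hW : ∀ l ∉ B, ∑' y, p l y * W y ≤ W l + b) (haW : ∀ y ∈ B, a ≤ W y) (k : ℕ) :
    ∫⁻ ω, avoidWeight B W k (path M k ω) ∂P
      + ∑ j ∈ range (k + 1), a * P (path M j ⁻¹' firstHitSet B j) ≤ W x + k * b := by
  induction k with
  | zero =>
    have hpath : ∀ ω, path M 0 ω = fun _ => x := fun ω => funext fun i => by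
      rw [Fin.fin_one_eq_zero i]; exact hM0 ω
    by_cases hx : x ∈ B <;> simp [hpath, avoidWeight, avoidSet, firstHitSet, hx, haW]
  | succ k ih =>
    calc _ = (∫⁻ ω, avoidWeight B W (k + 1) (path M (k + 1) ω) ∂P
            + a * P (path M (k + 1) ⁻¹' firstHitSet B (k + 1)))
          + ∑ j ∈ range (k + 1), a * P (path M j ⁻¹' firstHitSet B j) := by
          rw [sum_range_succ]; ring
      _ ≤ (∫⁻ ω, avoidWeight B W k (path M k ω) ∂P + b)
          + ∑ j ∈ range (k + 1), a * P (path M j ⁻¹' firstHitSet B j) :=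
        add_le_add_left (lintegral_avoidWeight_succ_add_le hM hMarkov hW haW k) _
      _ ≤ W x + k * b + b := by rw [add_right_comm]; gcongr
      _ = _ := by push_cast; ring

theorem mul_measure_exists_le_mem_le [IsProbabilityMeasure P] (hM : ∀ k, Measurable (M k))
    {x : α} (hM0 : ∀ ω, M 0 ω = x)
    (hMarkov : IsMarkovChain P M p)
    (hW : ∀ l ∉ B, ∑' y, p l y * W y ≤ W l + b) (haW : ∀ y ∈ B, a ≤ W y) (n : ℕ) :
    a * P {ω | ∃ k ≤ n, M k ω ∈ B} ≤ W x + n * b :=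
  calc a * P {ω | ∃ k ≤ n, M k ω ∈ B}
      ≤ a * ∑ j ∈ range (n + 1), P (path M j ⁻¹' firstHitSet B j) := by
        gcongr
        exact (measure_mono (setOf_exists_le_mem_subset M B n)).trans
          (measure_biUnion_finset_le _ _)
    _ ≤ _ := by rw [mul_sum]; exact le_add_self
    _ ≤ W x + n * b := lintegral_avoidWeight_add_sum_le hM hM0 hMarkov hW haW n

end MarkovChain

namespace LogisticBranching

def windowExcess (m r t : ℝ) : ℝ := t - max (m - r) (min (m + r) t)

variable {m r : ℝ}

lemma windowExcess_eq_zero {t : ℝ} (h : |t - m| ≤ r) : windowExcess m r t = 0 := by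
  rw [abs_le] at h
  rw [windowExcess, min_eq_right (by linarith), max_eq_right (by linarith), sub_self]

lemma sq_le_windowExcess_sq (hr : 0 ≤ r) {s t : ℝ} (hs : 0 ≤ s) (h : r + s ≤ |t - m|) :
    s ^ 2 ≤ windowExcess m r t ^ 2 := by
  rw [← sq_abs (windowExcess m r t)]
  refine pow_le_pow_left₀ hs ?_ 2
  rcases le_total m t with hmt | hmt
  · rw [abs_of_nonneg (by linarith)] at h
    rw [windowExcess, min_eq_left (by linarith), max_eq_right (by linarith),
      abs_of_nonneg (by linarith)]
    linarith
  · rw [abs_of_nonpos (by linarith)] at h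
    rw [windowExcess, min_eq_right (by linarith), max_eq_left (by linarith),
      abs_of_nonpos (by linarith)]
    linarith

/-- The right side is the squared distance from `s` to the projection of `t` onto
`[m - r, m + r]`. -/
lemma windowExcess_sq_le (hr : 0 ≤ r) (s t : ℝ) :
    windowExcess m r s ^ 2 ≤ (windowExcess m r t + (s - t)) ^ 2 := by
  obtain ⟨c, hc₁, hc₂, hc⟩ : ∃ c, m - r ≤ c ∧ c ≤ m + r ∧ windowExcess m r t + (s - t) = s - c :=
    ⟨_, le_max_left _ _, max_le (by linarith) (min_le_left _ _), by rw [windowExcess]; ring⟩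
  rw [hc, windowExcess]
  rcases le_total s (m + r) with hs | hs
  · rw [min_eq_right hs]
    rcases le_total (m - r) s with hs' | hs'
    · rw [max_eq_right hs', sub_self, zero_pow two_ne_zero]; positivity
    · rw [max_eq_left hs']; nlinarith
  · rw [min_eq_left hs, max_eq_right (by linarith)]; nlinarith

lemma windowExcess_mul_nonpos (hr : 0 ≤ r) {t D : ℝ} (hup : m + r < t → D ≤ 0)
    (hdown : t < m - r → 0 ≤ D) : windowExcess m r t * D ≤ 0 := by
  rcases lt_or_ge (m + r) t with ht | ht
  · rw [windowExcess, min_eq_left ht.le, max_eq_right (by linarith)]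
    exact mul_nonpos_of_nonneg_of_nonpos (by linarith) (hup ht)
  rcases lt_or_ge t (m - r) with ht' | ht'
  · rw [windowExcess, min_eq_right ht, max_eq_left ht'.le]
    exact mul_nonpos_of_nonpos_of_nonneg (by linarith) (hdown ht')
  · rw [windowExcess_eq_zero (abs_le.2 ⟨by linarith, by linarith⟩), zero_mul]

lemma tsum_mul_windowExcess_sq_le {ι : Type*} {p X : ι → ℝ} {t D S : ℝ} (hr : 0 ≤ r)
    (hp : ∀ i, 0 ≤ p i) (h1 : HasSum p 1) (hD : HasSum (fun i => p i * (X i - t)) D)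
    (hS : HasSum (fun i => p i * (X i - t) ^ 2) S) (hsign : windowExcess m r t * D ≤ 0) :
    Summable (fun i => p i * windowExcess m r (X i) ^ 2)
      ∧ ∑' i, p i * windowExcess m r (X i) ^ 2 ≤ windowExcess m r t ^ 2 + S := by
  set e := windowExcess m r t
  have hbound : ∀ i, p i * windowExcess m r (X i) ^ 2
      ≤ e ^ 2 * p i + 2 * e * (p i * (X i - t)) + p i * (X i - t) ^ 2 := fun i =>
    calc _ ≤ p i * (e + (X i - t)) ^ 2 :=
          mul_le_mul_of_nonneg_left (windowExcess_sq_le hr (X i) t) (hp i)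
      _ = _ := by ring
  have hsum := ((h1.mul_left (e ^ 2)).add (hD.mul_left (2 * e))).add hS
  have hsumm := hsum.summable.of_nonneg_of_le (fun i => mul_nonneg (hp i) (sq_nonneg _)) hbound
  refine ⟨hsumm, (hasSum_le hbound hsumm.hasSum hsum).trans ?_⟩
  nlinarith

lemma hasSum_mul_of_skipFree {π p f : ℕ → ℝ} {l : ℕ} {a b s : ℝ} (hl : 1 ≤ l)
    (hbelow : ∀ z, z + 1 < l → p z = 0) (hdown : p (l - 1) = a) (hup : ∀ j, p (j + l) = b * π j)
    (hs : HasSum (fun j => π j * f (j + l)) s) :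
    HasSum (fun z => p z * f z) (a * f (l - 1) + b * s) := by
  rw [← hasSum_nat_add_iff' l]
  have hfirst : ∑ i ∈ range l, p i * f i = a * f (l - 1) := by
    rw [sum_eq_single (l - 1) (fun z hz hne => by rw [hbelow z (by simp at hz; omega), zero_mul])
      (by simp; omega), hdown]
  rw [hfirst, add_sub_cancel_left]
  simpa only [hup, mul_assoc] using hs.mul_left b

lemma one_le_of_hasSum_pow_mul {π : ℕ → ℝ} (hπ0 : π 0 = 0) (hπnn : ∀ j, 0 ≤ π j)
    (hπ : HasSum π 1) (k : ℕ) {s : ℝ} (hs : HasSum (fun j : ℕ => (j : ℝ) ^ k * π j) s) :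
    1 ≤ s := by
  refine hasSum_le (fun j => ?_) hπ hs
  rcases Nat.eq_zero_or_pos j with rfl | hj
  · simp [hπ0]
  · exact le_mul_of_one_le_left (hπnn j) (one_le_pow₀ (by exact_mod_cast hj))

lemma tsum_ofReal_mul_ofReal_le {ι : Type*} {f g : ι → ℝ} {c : ℝ} (hf : ∀ i, 0 ≤ f i)
    (hg : ∀ i, 0 ≤ g i) (hs : Summable fun i => f i * g i) (h : ∑' i, f i * g i ≤ c) :
    ∑' i, ENNReal.ofReal (f i) * ENNReal.ofReal (g i) ≤ ENNReal.ofReal c := by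
  simp_rw [← ENNReal.ofReal_mul (hf _)]
  rw [← ENNReal.ofReal_tsum_of_nonneg (fun i => mul_nonneg (hf i) (hg i)) hs]
  exact ENNReal.ofReal_le_ofReal h

lemma toReal_le_div_of_ofReal_mul_le {x : ℝ≥0∞} {a c : ℝ} (ha : 0 < a) (hc : 0 ≤ c)
    (h : ENNReal.ofReal a * x ≤ ENNReal.ofReal c) : x.toReal ≤ c / a := by
  refine ENNReal.toReal_le_of_le_ofReal (div_nonneg hc ha.le) ?_
  rw [ENNReal.ofReal_div_of_pos ha, ENNReal.le_div_iff_mul_le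
    (Or.inl (ENNReal.ofReal_pos.2 ha).ne') (Or.inl ENNReal.ofReal_ne_top), mul_comm]
  exact h

structure IsEmbeddedLogisticKernel (π h : ℕ → ℝ) (ρ d c : ℝ) (p : ℕ → ℕ → ℝ) : Prop where
  offspring_zero : π 0 = 0
  offspring_nonneg : ∀ j, 0 ≤ π j
  branching_pos : 0 < ρ
  death_nonneg : 0 ≤ d
  competition_nonneg : 0 ≤ c
  h_pos : ∀ k, 0 < h k
  zero_zero : p 0 0 = 1
  zero_of_ne : ∀ y, y ≠ 0 → p 0 y = 0
  up : ∀ x y : ℕ, 1 ≤ x → x < y →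
    p x y = ρ * x * h x * π (y - x) / ((x : ℝ) * (d + ρ * h x + c * ((x : ℝ) - 1)))
  down : ∀ x : ℕ, 1 ≤ x →
    p x (x - 1) = (d * x + c * x * ((x : ℝ) - 1)) / ((x : ℝ) * (d + ρ * h x + c * ((x : ℝ) - 1)))
  of_not_adj : ∀ x y : ℕ, 1 ≤ x → y ≠ x - 1 → ¬ x < y → p x y = 0

namespace IsEmbeddedLogisticKernel

variable {π h : ℕ → ℝ} {ρ d c : ℝ} {p : ℕ → ℕ → ℝ}

lemma skipFree (hp : IsEmbeddedLogisticKernel π h ρ d c p) {l : ℕ} (hl : 1 ≤ l) :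
    ∃ a b : ℝ, 0 ≤ a ∧ 0 ≤ b ∧ a + b = 1 ∧ (∀ z, z + 1 < l → p l z = 0)
      ∧ p l (l - 1) = a ∧ ∀ j, p l (j + l) = b * π j := by
  have hl' : (1 : ℝ) ≤ l := by exact_mod_cast hl
  have hc := hp.competition_nonneg
  have hd := hp.death_nonneg
  have hD : 0 < (l : ℝ) * (d + ρ * h l + c * ((l : ℝ) - 1)) := by
    have := mul_pos hp.branching_pos (hp.h_pos l)
    have := mul_nonneg hc (sub_nonneg.2 hl')
    positivity
  refine ⟨(d * l + c * l * ((l : ℝ) - 1)) / ((l : ℝ) * (d + ρ * h l + c * ((l : ℝ) - 1))),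
    ρ * l * h l / ((l : ℝ) * (d + ρ * h l + c * ((l : ℝ) - 1))), ?_, ?_, ?_,
    fun z hz => hp.of_not_adj l z hl (by omega) (by omega), hp.down l hl, fun j => ?_⟩
  · have := mul_nonneg hc (sub_nonneg.2 hl')
    positivity
  · have := hp.branching_pos
    have := hp.h_pos l
    positivity
  · rw [← add_div, div_eq_one_iff_eq hD.ne']; ring
  · rcases Nat.eq_zero_or_pos j with rfl | hj
    · rw [hp.of_not_adj l (0 + l) hl (by omega) (by omega), hp.offspring_zero, mul_zero]
    · rw [hp.up l (j + l) hl (by omega), Nat.add_sub_cancel]; ring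

lemma nonneg (hp : IsEmbeddedLogisticKernel π h ρ d c p) (l z : ℕ) : 0 ≤ p l z := by
  rcases Nat.eq_zero_or_pos l with rfl | hl
  · rcases eq_or_ne z 0 with rfl | hz
    · rw [hp.zero_zero]; exact zero_le_one
    · rw [hp.zero_of_ne z hz]
  obtain ⟨a, b, ha, hb, -, hbelow, hdown, hup⟩ := hp.skipFree hl
  rcases lt_trichotomy (z + 1) l with hz | hz | hz
  · rw [hbelow z hz]
  · rwa [show z = l - 1 by omega, hdown]
  · obtain ⟨j, rfl⟩ : ∃ j, z = j + l := ⟨z - l, by omega⟩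
    rw [hup]; exact mul_nonneg hb (hp.offspring_nonneg j)

lemma tsum_mul_windowExcess_sq_le (hp : IsEmbeddedLogisticKernel π h ρ d c p) (hπ : HasSum π 1)
    {πbar v2 : ℝ} (hmean : HasSum (fun j : ℕ => (j : ℝ) * π j) πbar)
    (hsecond : HasSum (fun j : ℕ => (j : ℝ) ^ 2 * π j) v2) (hv2 : 1 ≤ v2) {m r : ℝ} (hr : 0 ≤ r)
    (hdriftUp : ∀ l : ℕ, m + r < l → ∑' y : ℕ, p l y * ((y : ℝ) - l) ≤ 0)
    (hdriftDown : ∀ l : ℕ, 1 ≤ l → (l : ℝ) < m - r → 0 ≤ ∑' y : ℕ, p l y * ((y : ℝ) - l))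
    (l : ℕ) :
    Summable (fun z : ℕ => p l z * windowExcess m r z ^ 2)
      ∧ ∑' z : ℕ, p l z * windowExcess m r z ^ 2 ≤ windowExcess m r l ^ 2 + v2 := by
  rcases Nat.eq_zero_or_pos l with rfl | hl
  · have h0 := hasSum_single (f := fun z : ℕ => p 0 z * windowExcess m r z ^ 2) 0
      fun z hz => by rw [hp.zero_of_ne z hz, zero_mul]
    rw [hp.zero_zero, one_mul] at h0
    refine ⟨h0.summable, ?_⟩
    rw [h0.tsum_eq, Nat.cast_zero]
    linarith
  obtain ⟨a, b, ha, hb, hab, hbelow, hdown, hup⟩ := hp.skipFree hl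
  have hcast : ((l - 1 : ℕ) : ℝ) = l - 1 := by rw [Nat.cast_sub hl, Nat.cast_one]
  have hmoment (f : ℕ → ℝ) {s : ℝ} := hasSum_mul_of_skipFree (f := f) (s := s) hl hbelow hdown hup
  have h1 : HasSum (p l) 1 := by
    convert hmoment (fun _ => 1) (s := 1) (by simpa using hπ) using 1 <;> simp [hab]
  have hD : HasSum (fun z : ℕ => p l z * ((z : ℝ) - l)) (b * πbar - a) := by
    convert hmoment (fun z : ℕ => (z : ℝ) - l) (s := πbar) (by simpa [mul_comm] using hmean) using 1
    rw [hcast]; ring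
  have hS : HasSum (fun z : ℕ => p l z * ((z : ℝ) - l) ^ 2) (a + b * v2) := by
    convert hmoment (fun z : ℕ => ((z : ℝ) - l) ^ 2) (s := v2) (by simpa [mul_comm] using hsecond)
      using 1
    rw [hcast]; ring
  have hsign := windowExcess_mul_nonpos hr (fun ht => hD.tsum_eq ▸ hdriftUp l ht)
    (fun ht => hD.tsum_eq ▸ hdriftDown l hl ht)
  obtain ⟨hsumm, hle⟩ := LogisticBranching.tsum_mul_windowExcess_sq_le (X := fun z : ℕ => (z : ℝ))
    hr (hp.nonneg l) h1 hD hS hsign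
  exact ⟨hsumm, hle.trans (by nlinarith)⟩

lemma tsum_ofReal_mul_ofReal_windowExcess_sq_le (hp : IsEmbeddedLogisticKernel π h ρ d c p)
    (hπ : HasSum π 1) {πbar v2 : ℝ} (hmean : HasSum (fun j : ℕ => (j : ℝ) * π j) πbar)
    (hsecond : HasSum (fun j : ℕ => (j : ℝ) ^ 2 * π j) v2) (hv2 : 1 ≤ v2) {m r : ℝ} (hr : 0 ≤ r)
    (hdriftUp : ∀ l : ℕ, m + r < l → ∑' y : ℕ, p l y * ((y : ℝ) - l) ≤ 0)
    (hdriftDown : ∀ l : ℕ, 1 ≤ l → (l : ℝ) < m - r → 0 ≤ ∑' y : ℕ, p l y * ((y : ℝ) - l))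
    (l : ℕ) :
    ∑' z : ℕ, ENNReal.ofReal (p l z) * ENNReal.ofReal (windowExcess m r z ^ 2)
      ≤ ENNReal.ofReal (windowExcess m r l ^ 2) + ENNReal.ofReal v2 := by
  obtain ⟨hsumm, hle⟩ :=
    hp.tsum_mul_windowExcess_sq_le hπ hmean hsecond hv2 hr hdriftUp hdriftDown l
  rw [← ENNReal.ofReal_add (sq_nonneg _) (by linarith)]
  exact tsum_ofReal_mul_ofReal_le (hp.nonneg l) (fun _ => sq_nonneg _) hsumm hle

end IsEmbeddedLogisticKernel

end LogisticBranching

open LogisticBranching MarkovChain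

theorem logistic_embedded_maximal_deviation_general
    (π : ℕ → ℝ) (hπ0 : π 0 = 0) (hπnn : ∀ j, 0 ≤ π j) (hπsum : ∑' j : ℕ, π j = 1)
    (πbar v2 : ℝ)
    (hmean : HasSum (fun j : ℕ => (j : ℝ) * π j) πbar)
    (hsecond : HasSum (fun j : ℕ => (j : ℝ) ^ 2 * π j) v2)
    (ρ d c : ℕ → ℝ) (h : ℕ → ℕ → ℝ)
    (hρ : ∀ N, 0 < ρ N) (hd : ∀ N, 0 ≤ d N) (hc : ∀ N, 0 < c N)
    (hhpos : ∀ N k, 0 < h N k)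
    (μ σ : ℕ → ℝ)
    (hμ : ∀ N, μ N = πbar * ρ N / c N) (hσ : ∀ N, σ N = Real.sqrt (μ N))
    -- the transition kernel of the embedded jump chain:
    (p : ℕ → ℕ → ℕ → ℝ)
    (hp00 : ∀ N, p N 0 0 = 1) (hp0 : ∀ N y, y ≠ 0 → p N 0 y = 0)
    (hpup : ∀ N x y : ℕ, 1 ≤ x → x < y →
      p N x y = ρ N * x * h N x * π (y - x)
        / ((x : ℝ) * (d N + ρ N * h N x + c N * ((x : ℝ) - 1))))
    (hpdown : ∀ N x : ℕ, 1 ≤ x →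
      p N x (x - 1) = (d N * x + c N * x * ((x : ℝ) - 1))
        / ((x : ℝ) * (d N + ρ N * h N x + c N * ((x : ℝ) - 1))))
    (hpzero : ∀ N x y : ℕ, 1 ≤ x → y ≠ x - 1 → ¬ x < y → p N x y = 0)
    -- η from the drift-sign lemma:
    (η : ℝ) (hη : 0 < η) (N₁ : ℕ)
    (hdrift : ∀ N : ℕ, N₁ ≤ N →
      (∀ x : ℕ, μ N + η * σ N ≤ (x : ℝ) → (∑' y : ℕ, p N x y * ((y : ℝ) - x)) < 0) ∧
      (∀ x : ℕ, 1 ≤ x → (x : ℝ) ≤ μ N - η * σ N →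
        0 < ∑' y : ℕ, p N x y * ((y : ℝ) - x)))
    (lam η' : ℝ) (hlam : 2 * η < lam) (hη' : lam < η') :
    ∃ N₀ : ℕ, ∀ N : ℕ, N₀ ≤ N →
      ∀ x : ℕ, μ N - lam * σ N ≤ (x : ℝ) → (x : ℝ) ≤ μ N + lam * σ N →
      ∀ n : ℕ,
      ∀ (Ω : Type) (mΩ : MeasurableSpace Ω) (P : Measure Ω),
        IsProbabilityMeasure P →
        ∀ M : ℕ → Ω → ℕ, (∀ k, Measurable (M k)) → (∀ ω, M 0 ω = x) →
        (∀ (k : ℕ) (hist : Fin (k + 1) → ℕ) (y : ℕ),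
          P {ω | (∀ i : Fin (k + 1), M i.val ω = hist i) ∧ M (k + 1) ω = y}
            = ENNReal.ofReal (p N (hist (Fin.last k)) y)
              * P {ω | ∀ i : Fin (k + 1), M i.val ω = hist i}) →
        (P {ω | ∃ k : ℕ, k ≤ n ∧ η' * σ N < |(M k ω : ℝ) - μ N|}).toReal
          ≤ (2 * v2 / (η' - lam) ^ 2) * n / (σ N) ^ 2 := by
  have hπ : HasSum π 1 := hπsum ▸ (by_contra fun hs => by
    simp [tsum_eq_zero_of_not_summable hs] at hπsum : Summable π).hasSum
  have hπbar := one_le_of_hasSum_pow_mul hπ0 hπnn hπ 1 (by simpa using hmean)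
  have hv2 := one_le_of_hasSum_pow_mul hπ0 hπnn hπ 2 hsecond
  refine ⟨N₁, fun N hN x hx₁ hx₂ n Ω _ P _ M hM hM0 hMarkov => ?_⟩
  have hK : IsEmbeddedLogisticKernel π (h N) (ρ N) (d N) (c N) (p N) :=
    ⟨hπ0, hπnn, hρ N, hd N, (hc N).le, hhpos N, hp00 N, hp0 N, hpup N, hpdown N, hpzero N⟩
  have hMC : IsMarkovChain P M fun l y => ENNReal.ofReal (p N l y) := fun k hist y => by
    rw [path_succ_preimage_singleton_snoc, path_preimage_singleton]; exact hMarkov k hist y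
  have hσN : 0 < σ N := by
    rw [hσ, hμ]; exact Real.sqrt_pos.2 (div_pos (mul_pos (by linarith) (hρ N)) (hc N))
  have hr : 0 ≤ lam * σ N := mul_nonneg (by linarith) hσN.le
  have hησ : η * σ N ≤ lam * σ N := by gcongr; linarith
  have hstep := hK.tsum_ofReal_mul_ofReal_windowExcess_sq_le (m := μ N) hπ hmean hsecond hv2 hr
    (fun l hl => ((hdrift N hN).1 l (by linarith)).le)
    (fun l hl hl' => ((hdrift N hN).2 l hl (by linarith)).le)
  have hbad (y : ℕ) (hy : η' * σ N < |(y : ℝ) - μ N|) :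
      ENNReal.ofReal (((η' - lam) * σ N) ^ 2)
        ≤ ENNReal.ofReal (windowExcess (μ N) (lam * σ N) y ^ 2) :=
    ENNReal.ofReal_le_ofReal
      (sq_le_windowExcess_sq hr (mul_nonneg (by linarith) hσN.le) (by linarith))
  have key := mul_measure_exists_le_mem_le (B := {y : ℕ | η' * σ N < |(y : ℝ) - μ N|}) hM hM0
    hMC (fun l _ => hstep l) hbad n
  have hx : |(x : ℝ) - μ N| ≤ lam * σ N := abs_le.2 ⟨by linarith, by linarith⟩
  rw [windowExcess_eq_zero hx, zero_pow two_ne_zero, ENNReal.ofReal_zero, zero_add,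
    ← ENNReal.ofReal_natCast, ← ENNReal.ofReal_mul n.cast_nonneg] at key
  calc _ ≤ n * v2 / ((η' - lam) * σ N) ^ 2 :=
        toReal_le_div_of_ofReal_mul_le (pow_pos (mul_pos (by linarith) hσN) 2) (by positivity) key
    _ ≤ _ := by
      rw [mul_pow, div_mul_eq_mul_div, div_div, mul_comm (n : ℝ) v2]
      gcongr
      linarith

/-- Lemma (maximal deviation inequality for the embedded chain of the logistic
branching process). Let `p N` be the transition kernel of the embedded jump chain of
the logistic branching process, and let `η > 0` be such that (for large `N`) the
one-step mean displacement `Σ_y p_N(x,y)(y − x)` points towards `μ_N` outside the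
window `[μ_N − η σ_N, μ_N + η σ_N]`. Then for `λ > 2η` and `η' > λ` there is `N₀`
such that for all `N ≥ N₀`, every starting state
`x ∈ [μ_N − λ σ_N, μ_N + λ σ_N] ∩ ℕ` and every `n`, any discrete-time Markov chain
`M` with kernel `p N` started at `x` satisfies
`P(max_{0 ≤ k ≤ n} |M_k − μ_N| > η' σ_N) ≤ (2 v² / (η' − λ)²) · n / σ_N²`. -/
theorem logistic_embedded_maximal_deviation
    (π : ℕ → ℝ) (hπ0 : π 0 = 0) (hπnn : ∀ j, 0 ≤ π j) (hπsum : ∑' j : ℕ, π j = 1)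
    (πbar v2 : ℝ)
    (hmean : HasSum (fun j : ℕ => (j : ℝ) * π j) πbar)
    (hsecond : HasSum (fun j : ℕ => (j : ℝ) ^ 2 * π j) v2)
    (hthird : Summable (fun j : ℕ => (j : ℝ) ^ 3 * π j))
    (ρ d c : ℕ → ℝ) (h : ℕ → ℕ → ℝ)
    (hρ : ∀ N, 0 < ρ N) (hd : ∀ N, 0 ≤ d N) (hc : ∀ N, 0 < c N)
    (hhpos : ∀ N k, 0 < h N k) (hhbdd : ∀ N, ∃ M : ℝ, ∀ k, h N k ≤ M)
    (μ σ : ℕ → ℝ)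
    (hμ : ∀ N, μ N = πbar * ρ N / c N) (hσ : ∀ N, σ N = Real.sqrt (μ N))
    (hρ0 : Tendsto ρ atTop (nhds 0))
    (hρc : Tendsto (fun N => ρ N / c N) atTop atTop)
    (hdc : Tendsto (fun N => d N / c N) atTop (nhds 0))
    (hh : ∃ C : ℝ, ∃ ε : ℕ → ℝ, Tendsto ε atTop (nhds 0) ∧
      ∀ N k, |h N k - 1| ≤ C * ε N * |(k : ℝ) - μ N| / μ N)
    -- the transition kernel of the embedded jump chain:
    (p : ℕ → ℕ → ℕ → ℝ)
    (hp00 : ∀ N, p N 0 0 = 1) (hp0 : ∀ N y, y ≠ 0 → p N 0 y = 0)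
    (hpup : ∀ N x y : ℕ, 1 ≤ x → x < y →
      p N x y = ρ N * x * h N x * π (y - x)
        / ((x : ℝ) * (d N + ρ N * h N x + c N * ((x : ℝ) - 1))))
    (hpdown : ∀ N x : ℕ, 1 ≤ x →
      p N x (x - 1) = (d N * x + c N * x * ((x : ℝ) - 1))
        / ((x : ℝ) * (d N + ρ N * h N x + c N * ((x : ℝ) - 1))))
    (hpzero : ∀ N x y : ℕ, 1 ≤ x → y ≠ x - 1 → ¬ x < y → p N x y = 0)
    -- η from the drift-sign lemma:
    (η : ℝ) (hη : 0 < η) (N₁ : ℕ)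
    (hdrift : ∀ N : ℕ, N₁ ≤ N →
      (∀ x : ℕ, μ N + η * σ N ≤ (x : ℝ) → (∑' y : ℕ, p N x y * ((y : ℝ) - x)) < 0) ∧
      (∀ x : ℕ, 1 ≤ x → (x : ℝ) ≤ μ N - η * σ N →
        0 < ∑' y : ℕ, p N x y * ((y : ℝ) - x)))
    (lam η' : ℝ) (hlam : 2 * η < lam) (hη' : lam < η') :
    ∃ N₀ : ℕ, ∀ N : ℕ, N₀ ≤ N →
      ∀ x : ℕ, μ N - lam * σ N ≤ (x : ℝ) → (x : ℝ) ≤ μ N + lam * σ N →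
      ∀ n : ℕ,
      ∀ (Ω : Type) (mΩ : MeasurableSpace Ω) (P : Measure Ω),
        IsProbabilityMeasure P →
        ∀ M : ℕ → Ω → ℕ, (∀ k, Measurable (M k)) → (∀ ω, M 0 ω = x) →
        (∀ (k : ℕ) (hist : Fin (k + 1) → ℕ) (y : ℕ),
          P {ω | (∀ i : Fin (k + 1), M i.val ω = hist i) ∧ M (k + 1) ω = y}
            = ENNReal.ofReal (p N (hist (Fin.last k)) y)
              * P {ω | ∀ i : Fin (k + 1), M i.val ω = hist i}) →
        (P {ω | ∃ k : ℕ, k ≤ n ∧ η' * σ N < |(M k ω : ℝ) - μ N|}).toReal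
          ≤ (2 * v2 / (η' - lam) ^ 2) * n / (σ N) ^ 2 :=
  logistic_embedded_maximal_deviation_general π hπ0 hπnn hπsum πbar v2 hmean hsecond ρ d c h hρ hd
    hc hhpos μ σ hμ hσ p hp00 hp0 hpup hpdown hpzero η hη N₁ hdrift lam η' hlam hη'
end

section
/- Detailed balance of the conditioned binomial distribution for the Moran line counting rates. Let N ∈ ℕ, s > 0, γ > 0 and set p := 2s/(2s + γ). Then for every integer k with 1 ≤ k ≤ N − 1, C(N,k) p^k (1−p)^{N−k} · k s (1 − k/N) = C(N,k+1) p^{k+1} (1−p)^{N−k−1} · (γ/N) · (k+1) k / 2, where C(N,k) denotes the binomial coefficient. Consequently the Binomial(N, p) distribution conditioned to be nonzero, π(k) = C(N,k) p^k (1−p)^{N−k} / (1 − (1−p)^N) for k ∈ {1,…,N}, satisfies detailed balance π(k) r(k,k+1) = π(k+1) r(k+1,k) for the rates r(k,k+1) = k s (1 − k/N), r(k,k−1) = (γ/N) k(k−1)/2, and is therefore a reversible (hence stationary) distribution for the line counting process of the ancestral selection graph. -/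
/-- Detailed balance of the conditioned binomial distribution for the Moran line
counting rates: with `p = 2s/(2s + γ)`, for all `1 ≤ k ≤ N − 1`,
`C(N,k) p^k (1−p)^{N−k} · k s (1 − k/N)
  = C(N,k+1) p^{k+1} (1−p)^{N−k−1} · (γ/N)(k+1)k/2`;
consequently the Binomial(N,p) distribution conditioned to be nonzero satisfies the
detailed balance equations `π(k) r(k,k+1) = π(k+1) r(k+1,k)` for the rates
`r(k,k+1) = k s (1 − k/N)` and `r(k,k−1) = (γ/N) k(k−1)/2`. -/
theorem moran_detailed_balance
    (N : ℕ) (s γ : ℝ) (hs : 0 < s) (hγ : 0 < γ)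
    (p : ℝ) (hp : p = 2 * s / (2 * s + γ)) :
    (∀ k : ℕ, 1 ≤ k → k ≤ N - 1 →
      (N.choose k : ℝ) * p ^ k * (1 - p) ^ (N - k) * ((k : ℝ) * s * (1 - (k : ℝ) / N))
        = (N.choose (k + 1) : ℝ) * p ^ (k + 1) * (1 - p) ^ (N - (k + 1))
          * ((γ / N) * (((k : ℝ) + 1) * k) / 2))
    ∧ (∀ k : ℕ, 1 ≤ k → k ≤ N - 1 →
      ((N.choose k : ℝ) * p ^ k * (1 - p) ^ (N - k) / (1 - (1 - p) ^ N))
          * ((k : ℝ) * s * (1 - (k : ℝ) / N))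
        = ((N.choose (k + 1) : ℝ) * p ^ (k + 1) * (1 - p) ^ (N - (k + 1))
            / (1 - (1 - p) ^ N))
          * ((γ / N) * (((k : ℝ) + 1) * (((k : ℝ) + 1) - 1)) / 2)) := by
  have hsum : 2 * s + γ ≠ 0 := by positivity
  have hkey : (1 - p) * s = p * (γ / 2) := by
    rw [hp]; field_simp; ring
  have main : ∀ k : ℕ, 1 ≤ k → k ≤ N - 1 →
      (N.choose k : ℝ) * p ^ k * (1 - p) ^ (N - k) * ((k : ℝ) * s * (1 - (k : ℝ) / N))
        = (N.choose (k + 1) : ℝ) * p ^ (k + 1) * (1 - p) ^ (N - (k + 1))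
          * ((γ / N) * (((k : ℝ) + 1) * k) / 2) := by
    intro k hk1 hk2
    have hkN : k + 1 ≤ N := by omega
    have hNR : (N : ℝ) ≠ 0 := by
      have : 0 < N := by omega
      exact_mod_cast this.ne'
    have hC : (N.choose (k + 1) : ℝ) * ((k : ℝ) + 1) = (N.choose k : ℝ) * ((N : ℝ) - k) := by
      have := Nat.choose_succ_right_eq N k
      have h2 : ((N.choose (k+1) * (k+1) : ℕ) : ℝ) = ((N.choose k * (N - k) : ℕ) : ℝ) := by
        exact_mod_cast this
      push_cast [Nat.cast_sub (by omega : k ≤ N)] at h2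
      linarith [h2]
    rw [show N - k = (N - (k + 1)) + 1 from by omega, pow_succ, pow_succ,
      show 1 - (k : ℝ) / N = ((N : ℝ) - k) / N from by field_simp]
    linear_combination (p ^ k * (1 - p) ^ (N - (k + 1)) * (k : ℝ) / N
        * (N.choose k : ℝ) * ((N : ℝ) - (k : ℝ))) * hkey
      - (p ^ k * (1 - p) ^ (N - (k + 1)) * (k : ℝ) / N * p * γ / 2) * hC
  refine ⟨main, fun k hk1 hk2 => ?_⟩
  have h := main k hk1 hk2
  have : ((k : ℝ) + 1) - 1 = (k : ℝ) := by ring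
  rw [this, div_mul_eq_mul_div, div_mul_eq_mul_div, h]
end
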